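/- arXiv:2411.03006 — 8 statements merged into one kernel-verified Lean document; each statement's English description precedes it below -/
import Mathlib

section
/- If a function f : ℝ^d → ℝ is computed by a rank-k maxout network of size s, then f can be written as a difference f = g − h of two functions g and h each of which is computed by a monotone rank-k maxout network of size s (i.e., a rank-k maxout network of size s all of whose weights are nonnegative). -/
open Finset Pointwise

def IsPolytope {d : ℕ} (P : Set (Fin d → ℝ)) : Prop :=
  ∃ V : Finset (Fin d → ℝ), V.Nonempty ∧ P = convexHull ℝ (V : Set (Fin d → ℝ))

noncomputable def suppFn {d : ℕ} (P : Set (Fin d → ℝ)) (c : Fin d → ℝ) : ℝ :=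
  sSup ((fun x => ∑ m, c m * x m) '' P)

def HasExtFormOfSize {d : ℕ} (P : Set (Fin d → ℝ)) (m : ℕ) : Prop :=
  ∃ (e m' : ℕ) (A : Matrix (Fin m) (Fin e) ℝ) (b : Fin m → ℝ)
    (C : Matrix (Fin m') (Fin e) ℝ) (d' : Fin m' → ℝ)
    (π : (Fin e → ℝ) →ᵃ[ℝ] (Fin d → ℝ)),
    π '' {y | A.mulVec y ≤ b ∧ C.mulVec y = d'} = P

noncomputable def xc {d : ℕ} (P : Set (Fin d → ℝ)) : ℕ :=
  sInf {m | HasExtFormOfSize P m}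

def MaxoutComputes {d : ℕ} (k s : ℕ) (a : Fin s → Fin k → Fin d → ℝ)
    (w : Fin s → Fin k → Fin s → ℝ) (f : (Fin d → ℝ) → ℝ) : Prop :=
  ∃ (z : Fin s → (Fin d → ℝ) → ℝ) (hs : 0 < s),
    (∀ j x, IsGreatest (Set.range fun i : Fin k =>
        ∑ m, a j i m * x m +
        ∑ l ∈ Finset.univ.filter (fun l => l < j), w j i l * z l x) (z j x)) ∧
    f = z ⟨s - 1, Nat.sub_lt hs Nat.one_pos⟩

def IsMaxoutNetwork {d : ℕ} (k s : ℕ) (f : (Fin d → ℝ) → ℝ) : Prop :=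
  ∃ (a : Fin s → Fin k → Fin d → ℝ) (w : Fin s → Fin k → Fin s → ℝ),
    MaxoutComputes k s a w f

def IsMonotoneMaxoutNetwork {d : ℕ} (k s : ℕ) (f : (Fin d → ℝ) → ℝ) : Prop :=
  ∃ (a : Fin s → Fin k → Fin d → ℝ) (w : Fin s → Fin k → Fin s → ℝ),
    (∀ j i m, 0 ≤ a j i m) ∧ (∀ j i l, 0 ≤ w j i l) ∧ MaxoutComputes k s a w f

def epiSet {d : ℕ} (f : (Fin d → ℝ) → ℝ) : Set (Fin (d + 1) → ℝ) :=
  {p | f (fun m => p m.castSucc) ≤ p (Fin.last d)}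

def argmaxSet {d : ℕ} (c : Fin d → ℝ) (S : Set (Fin d → ℝ)) : Set (Fin d → ℝ) :=
  {x | x ∈ S ∧ ∀ y ∈ S, ∑ m, c m * y m ≤ ∑ m, c m * x m}

def iterFaces {d : ℕ} (c : Fin d → Fin d → ℝ) (S : Set (Fin d → ℝ)) : ℕ → Set (Fin d → ℝ)
  | 0 => S
  | i + 1 => if h : i < d then argmaxSet (c ⟨i, h⟩) (iterFaces c S i) else iterFaces c S i

noncomputable def vxc {d : ℕ} (P : Set (Fin d → ℝ)) : ℕ :=
  sInf {m | ∃ Q R : Set (Fin d → ℝ), IsPolytope Q ∧ IsPolytope R ∧ P + Q = R ∧ m = xc Q + xc R}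

def coneGen {d : ℕ} (S : Set (Fin d → ℝ)) : Set (Fin d → ℝ) :=
  ⋂₀ {K | S ⊆ K ∧ Convex ℝ K ∧ ∀ x ∈ K, ∀ t : ℝ, 0 < t → t • x ∈ K}

def polarCone {d : ℕ} (K : Set (Fin d → ℝ)) : Set (Fin d → ℝ) :=
  {z | ∀ y ∈ K, ∑ i, z i * y i ≤ 0}

noncomputable def Cmat {k s : ℕ} (w : Fin s → Fin k → Fin s → ℝ) : ℕ → Fin s → ℝ
  | j => fun m =>
    if h : (m : ℕ) < j ∧ j < s then
      ∑ i : Fin k, (|w ⟨j, h.2⟩ i m| +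
        ∑ l : Fin s, if hl : (l : ℕ) < j then |w ⟨j, h.2⟩ i l| * Cmat w (l : ℕ) m else 0)
    else 0
  decreasing_by exact hl

noncomputable def gamv {d k s : ℕ} (a : Fin s → Fin k → Fin d → ℝ)
    (w : Fin s → Fin k → Fin s → ℝ) : ℕ → Fin d → ℝ
  | j => fun m =>
    if h : j < s then
      ∑ i : Fin k, (|a ⟨j, h⟩ i m| +
        ∑ l : Fin s, if hl : (l : ℕ) < j then |w ⟨j, h⟩ i l| * gamv a w (l : ℕ) m else 0)
    else 0
  decreasing_by exact hl

lemma Cmat_eq {k s : ℕ} (w : Fin s → Fin k → Fin s → ℝ) (j : ℕ) (m : Fin s) :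
    Cmat w j m = if h : (m : ℕ) < j ∧ j < s then
      ∑ i : Fin k, (|w ⟨j, h.2⟩ i m| +
        ∑ l : Fin s, if hl : (l : ℕ) < j then |w ⟨j, h.2⟩ i l| * Cmat w (l : ℕ) m else 0)
    else 0 := by
  rw [Cmat.eq_def]

lemma gamv_eq {d k s : ℕ} (a : Fin s → Fin k → Fin d → ℝ) (w : Fin s → Fin k → Fin s → ℝ)
    (j : ℕ) (m : Fin d) :
    gamv a w j m = if h : j < s then
      ∑ i : Fin k, (|a ⟨j, h⟩ i m| +
        ∑ l : Fin s, if hl : (l : ℕ) < j then |w ⟨j, h⟩ i l| * gamv a w (l : ℕ) m else 0)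
    else 0 := by
  rw [gamv.eq_def]

lemma Cmat_nonneg {k s : ℕ} (w : Fin s → Fin k → Fin s → ℝ) :
    ∀ (j : ℕ) (m : Fin s), 0 ≤ Cmat w j m := by
  intro j
  induction j using Nat.strong_induction_on with
  | _ j ih =>
    intro m
    rw [Cmat_eq]
    split
    · refine Finset.sum_nonneg fun i _ => add_nonneg (abs_nonneg _) (Finset.sum_nonneg fun l _ => ?_)
      split
      · exact mul_nonneg (abs_nonneg _) (ih _ (by assumption) m)
      · exact le_rfl
    · exact le_rfl

lemma gamv_nonneg {d k s : ℕ} (a : Fin s → Fin k → Fin d → ℝ)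
    (w : Fin s → Fin k → Fin s → ℝ) : ∀ (j : ℕ) (m : Fin d), 0 ≤ gamv a w j m := by
  intro j
  induction j using Nat.strong_induction_on with
  | _ j ih =>
    intro m
    rw [gamv_eq]
    split
    · refine Finset.sum_nonneg fun i _ => add_nonneg (abs_nonneg _) (Finset.sum_nonneg fun l _ => ?_)
      split
      · exact mul_nonneg (abs_nonneg _) (ih _ (by assumption) m)
      · exact le_rfl
    · exact le_rfl

lemma Cmat_eq_zero {k s : ℕ} (w : Fin s → Fin k → Fin s → ℝ) {j : ℕ} {m : Fin s}
    (h : ¬ ((m : ℕ) < j)) : Cmat w j m = 0 := by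
  rw [Cmat_eq, dif_neg (by tauto)]

lemma Cmat_ge {k s : ℕ} (w : Fin s → Fin k → Fin s → ℝ) (j : Fin s) (i : Fin k) (m : Fin s)
    (hm : (m : ℕ) < (j : ℕ)) :
    -(w j i m) + ∑ l ∈ Finset.univ.filter (fun l => l < j), w j i l * Cmat w (l : ℕ) m
      ≤ Cmat w (j : ℕ) m := by
  rw [Cmat_eq, dif_pos ⟨hm, j.isLt⟩]
  simp only [Fin.eta]
  have h1 : |w j i m| + ∑ l : Fin s, (if hl : (l : ℕ) < (j : ℕ) then |w j i l| * Cmat w (l : ℕ) m else 0)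
      ≤ ∑ i' : Fin k, (|w j i' m| + ∑ l : Fin s, if hl : (l : ℕ) < (j : ℕ) then |w j i' l| * Cmat w (l : ℕ) m else 0) := by
    refine Finset.single_le_sum (f := fun i' : Fin k => |w j i' m| + ∑ l : Fin s, if hl : (l : ℕ) < (j : ℕ) then |w j i' l| * Cmat w (l : ℕ) m else 0) (fun i' _ => add_nonneg (abs_nonneg _) (Finset.sum_nonneg fun l _ => ?_)) (Finset.mem_univ i)
    split
    · exact mul_nonneg (abs_nonneg _) (Cmat_nonneg w _ m)
    · exact le_rfl
  refine le_trans (add_le_add (neg_le_abs _) ?_) h1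
  rw [Finset.sum_filter]
  refine Finset.sum_le_sum fun l _ => ?_
  by_cases hc : l < j
  · rw [if_pos hc, dif_pos (Fin.lt_def.mp hc)]
    exact mul_le_mul_of_nonneg_right (le_abs_self _) (Cmat_nonneg w _ m)
  · rw [if_neg hc, dif_neg (fun hc' => hc (Fin.lt_def.mpr hc'))]

lemma gamv_ge {d k s : ℕ} (a : Fin s → Fin k → Fin d → ℝ) (w : Fin s → Fin k → Fin s → ℝ)
    (j : Fin s) (i : Fin k) (m : Fin d) :
    -(a j i m) + ∑ l ∈ Finset.univ.filter (fun l => l < j), w j i l * gamv a w (l : ℕ) m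
      ≤ gamv a w (j : ℕ) m := by
  rw [gamv_eq, dif_pos j.isLt]
  simp only [Fin.eta]
  have h1 : |a j i m| + ∑ l : Fin s, (if hl : (l : ℕ) < (j : ℕ) then |w j i l| * gamv a w (l : ℕ) m else 0)
      ≤ ∑ i' : Fin k, (|a j i' m| + ∑ l : Fin s, if hl : (l : ℕ) < (j : ℕ) then |w j i' l| * gamv a w (l : ℕ) m else 0) := by
    refine Finset.single_le_sum (f := fun i' : Fin k => |a j i' m| + ∑ l : Fin s, if hl : (l : ℕ) < (j : ℕ) then |w j i' l| * gamv a w (l : ℕ) m else 0) (fun i' _ => add_nonneg (abs_nonneg _) (Finset.sum_nonneg fun l _ => ?_)) (Finset.mem_univ i)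
    split
    · exact mul_nonneg (abs_nonneg _) (gamv_nonneg a w _ m)
    · exact le_rfl
  refine le_trans (add_le_add (neg_le_abs _) ?_) h1
  rw [Finset.sum_filter]
  refine Finset.sum_le_sum fun l _ => ?_
  by_cases hc : l < j
  · rw [if_pos hc, dif_pos (Fin.lt_def.mp hc)]
    exact mul_le_mul_of_nonneg_right (le_abs_self _) (gamv_nonneg a w _ m)
  · rw [if_neg hc, dif_neg (fun hc' => hc (Fin.lt_def.mpr hc'))]

noncomputable def alphaNew {d k s : ℕ} (a : Fin s → Fin k → Fin d → ℝ)
    (w : Fin s → Fin k → Fin s → ℝ) : Fin s → Fin k → Fin d → ℝ := fun j i m =>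
  a j i m - (∑ l ∈ Finset.univ.filter (fun l => l < j), w j i l * gamv a w (l : ℕ) m)
    + gamv a w (j : ℕ) m

noncomputable def Anew {d : ℕ} {k s : ℕ} (a : Fin s → Fin k → Fin d → ℝ)
    (w : Fin s → Fin k → Fin s → ℝ) : Fin s → Fin k → Fin s → ℝ := fun j i m =>
  (if m < j then w j i m else 0)
    - (∑ l ∈ Finset.univ.filter (fun l => l < j), w j i l * Cmat w (l : ℕ) m)
    + Cmat w (j : ℕ) m

lemma alphaNew_nonneg {d k s : ℕ} (a : Fin s → Fin k → Fin d → ℝ)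
    (w : Fin s → Fin k → Fin s → ℝ) (j : Fin s) (i : Fin k) (m : Fin d) :
    0 ≤ alphaNew a w j i m := by
  have := gamv_ge a w j i m
  unfold alphaNew
  linarith

lemma Anew_nonneg {d k s : ℕ} (a : Fin s → Fin k → Fin d → ℝ)
    (w : Fin s → Fin k → Fin s → ℝ) (j : Fin s) (i : Fin k) (m : Fin s) :
    0 ≤ Anew a w j i m := by
  unfold Anew
  by_cases hm : m < j
  · have := Cmat_ge w j i m (Fin.lt_def.mp hm)
    rw [if_pos hm]
    linarith
  · rw [if_neg hm]
    have hzero : ∑ l ∈ Finset.univ.filter (fun l => l < j), w j i l * Cmat w (l : ℕ) m = 0 := by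
      refine Finset.sum_eq_zero fun l hl => ?_
      have hl' : l < j := (Finset.mem_filter.mp hl).2
      have : ¬ ((m : ℕ) < (l : ℕ)) := by
        have h1 : (l : ℕ) < (j : ℕ) := Fin.lt_def.mp hl'
        have h2 : ¬ ((m : ℕ) < (j : ℕ)) := fun hc => hm (Fin.lt_def.mpr hc)
        omega
      rw [Cmat_eq_zero w this, mul_zero]
    rw [hzero]
    have := Cmat_nonneg w (j : ℕ) m
    linarith

lemma swap_sum_lemma {ι₁ ι₂ : Type*} (S : Finset ι₁) (T : Finset ι₂) (c : ι₁ → ℝ)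
    (g : ι₁ → ι₂ → ℝ) (x : ι₂ → ℝ) :
    ∑ m ∈ T, (∑ l ∈ S, c l * g l m) * x m = ∑ l ∈ S, c l * ∑ m ∈ T, g l m * x m := by
  simp_rw [Finset.sum_mul, Finset.mul_sum, mul_assoc]
  exact Finset.sum_comm

lemma isGreatest_sup' {k : ℕ} (hk : 0 < k) (g : Fin k → ℝ) :
    IsGreatest (Set.range g) ((Finset.univ : Finset (Fin k)).sup' ⟨⟨0, hk⟩, Finset.mem_univ _⟩ g) := by
  constructor
  · obtain ⟨i, -, hi⟩ := Finset.exists_mem_eq_sup' (⟨⟨0, hk⟩, Finset.mem_univ _⟩ :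
      (Finset.univ : Finset (Fin k)).Nonempty) g
    exact ⟨i, hi.symm⟩
  · rintro y ⟨i, rfl⟩
    exact Finset.le_sup' g (Finset.mem_univ i)

lemma exists_net {d k s : ℕ} (hk : 0 < k) (a : Fin s → Fin k → Fin d → ℝ)
    (w : Fin s → Fin k → Fin s → ℝ) :
    ∃ z : Fin s → (Fin d → ℝ) → ℝ, ∀ (j : Fin s) (x : Fin d → ℝ),
      IsGreatest (Set.range fun i : Fin k =>
        ∑ m, a j i m * x m +
        ∑ l ∈ Finset.univ.filter (fun l => l < j), w j i l * z l x) (z j x) := by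
  have hne : (Finset.univ : Finset (Fin k)).Nonempty := ⟨⟨0, hk⟩, Finset.mem_univ _⟩
  let U : (Fin s → (Fin d → ℝ) → ℝ) → Fin s → (Fin d → ℝ) → ℝ := fun zz jj x =>
    Finset.univ.sup' hne fun i : Fin k =>
      ∑ m, a jj i m * x m + ∑ l ∈ Finset.univ.filter (fun l => l < jj), w jj i l * zz l x
  let F : ℕ → Fin s → (Fin d → ℝ) → ℝ := fun n => Nat.rec (fun _ _ => 0)
    (fun n Fn jj x => if (jj : ℕ) = n then U Fn jj x else Fn jj x) n
  have hFsucc : ∀ (n : ℕ) (jj : Fin s) x,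
      F (n + 1) jj x = if (jj : ℕ) = n then U (F n) jj x else F n jj x := fun _ _ _ => rfl
  have hstab : ∀ (n : ℕ) (jj : Fin s), (jj : ℕ) < n → F n jj = F ((jj : ℕ) + 1) jj := by
    intro n
    induction n with
    | zero => intro jj hj; exact absurd hj (Nat.not_lt_zero _)
    | succ n ih =>
      intro jj hj
      rcases Nat.lt_succ_iff_lt_or_eq.mp hj with h | h
      · funext x
        rw [hFsucc n jj x, if_neg (by omega), congrFun (ih jj h) x]
      · rw [h]
  have hUc : ∀ (z1 z2 : Fin s → (Fin d → ℝ) → ℝ) (jj : Fin s),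
      (∀ l : Fin s, l < jj → z1 l = z2 l) → U z1 jj = U z2 jj := by
    intro z1 z2 jj hl
    funext x
    show Finset.univ.sup' hne _ = Finset.univ.sup' hne _
    congr 1
    funext i
    congr 1
    exact Finset.sum_congr rfl fun l hl' => by rw [hl l (Finset.mem_filter.mp hl').2]
  refine ⟨F s, fun j x => ?_⟩
  have e3 : U (F (j : ℕ)) j = U (F s) j :=
    hUc _ _ j fun l hl => by
      rw [hstab (j : ℕ) l (Fin.lt_def.mp hl), ← hstab s l l.isLt]
  have h1 : F s j x = U (F s) j x := by
    rw [congrFun (hstab s j j.isLt) x, hFsucc, if_pos rfl, congrFun e3 x]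
  rw [h1]
  exact isGreatest_sup' hk _

/-- Every function computed by a rank-`k` maxout network of size `s` is a
difference of two functions computed by monotone rank-`k` maxout networks of size `s`. -/
theorem maxout_eq_diff_of_monotone {d k s : ℕ} (f : (Fin d → ℝ) → ℝ)
    (hf : IsMaxoutNetwork k s f) :
    ∃ g h : (Fin d → ℝ) → ℝ, IsMonotoneMaxoutNetwork k s g ∧
      IsMonotoneMaxoutNetwork k s h ∧ f = g - h := by
  obtain ⟨a, w, z, hs, hz, hfz⟩ := hf
  have hk : 0 < k := by
    obtain ⟨i, -⟩ := (hz ⟨0, hs⟩ 0).1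
    exact i.pos
  obtain ⟨P, hP⟩ := exists_net hk (alphaNew a w) (Anew a w)
  set Qf : Fin s → (Fin d → ℝ) → ℝ := fun jj x =>
    (∑ l' : Fin s, Cmat w (jj : ℕ) l' * P l' x) + ∑ m, gamv a w (jj : ℕ) m * x m with hQf
  have hQfa : ∀ (jj : Fin s) (x : Fin d → ℝ), Qf jj x
      = (∑ l' : Fin s, Cmat w (jj : ℕ) l' * P l' x) + ∑ m, gamv a w (jj : ℕ) m * x m :=
    fun _ _ => rfl
  have hCs : ∀ (jj ll : Fin s) (x : Fin d → ℝ), (ll : ℕ) ≤ (jj : ℕ) →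
      ∑ l' ∈ Finset.univ.filter (fun l => l < jj), Cmat w (ll : ℕ) l' * P l' x
        = ∑ l' : Fin s, Cmat w (ll : ℕ) l' * P l' x := by
    intro jj ll x hle
    refine Finset.sum_subset (Finset.filter_subset _ _) fun l' _ hl' => ?_
    have h1 : ¬ (l' < jj) := by simpa using hl'
    have h3 : ¬ ((l' : ℕ) < (jj : ℕ)) := fun hc => h1 (Fin.lt_def.mpr hc)
    have h2 : ¬ ((l' : ℕ) < (ll : ℕ)) := by omega
    rw [Cmat_eq_zero w h2, zero_mul]
  have main : ∀ (N : ℕ) (j : Fin s), (j : ℕ) < N → ∀ x, z j x = P j x - Qf j x := by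
    intro N
    induction N with
    | zero => intro j hj; exact absurd hj (Nat.not_lt_zero _)
    | succ N ih =>
      intro j hj x
      have hE : ∀ i : Fin k,
          (∑ m, alphaNew a w j i m * x m
            + ∑ l ∈ Finset.univ.filter (fun l => l < j), Anew a w j i l * P l x)
          = (∑ m, a j i m * x m
            + ∑ l ∈ Finset.univ.filter (fun l => l < j), w j i l * z l x) + Qf j x := by
        intro i
        have e1 : ∑ m, alphaNew a w j i m * x m
            = ∑ m, a j i m * x m
              - ∑ l ∈ Finset.univ.filter (fun l => l < j),
                  w j i l * (∑ m, gamv a w (l : ℕ) m * x m)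
              + ∑ m, gamv a w (j : ℕ) m * x m := by
          unfold alphaNew
          rw [← swap_sum_lemma, ← Finset.sum_sub_distrib, ← Finset.sum_add_distrib]
          exact Finset.sum_congr rfl fun m _ => by ring
        have e2 : ∑ l ∈ Finset.univ.filter (fun l => l < j), Anew a w j i l * P l x
            = ∑ l ∈ Finset.univ.filter (fun l => l < j), w j i l * P l x
              - ∑ l ∈ Finset.univ.filter (fun l => l < j),
                  w j i l * (∑ l' : Fin s, Cmat w (l : ℕ) l' * P l' x)
              + ∑ l' : Fin s, Cmat w (j : ℕ) l' * P l' x := by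
          have m1 : ∑ l ∈ Finset.univ.filter (fun l => l < j),
                w j i l * (∑ l' : Fin s, Cmat w (l : ℕ) l' * P l' x)
              = ∑ l' ∈ Finset.univ.filter (fun l => l < j),
                (∑ l ∈ Finset.univ.filter (fun l => l < j), w j i l * Cmat w (l : ℕ) l') * P l' x := by
            rw [swap_sum_lemma]
            exact Finset.sum_congr rfl fun l hl =>
              congrArg (fun t => w j i l * t)
                (hCs j l x (le_of_lt (Fin.lt_def.mp (Finset.mem_filter.mp hl).2))).symm
          rw [m1, ← hCs j j x le_rfl, ← Finset.sum_sub_distrib, ← Finset.sum_add_distrib]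
          unfold Anew
          refine Finset.sum_congr rfl fun l hl => ?_
          rw [if_pos (Finset.mem_filter.mp hl).2]
          ring
        have e3 : ∑ l ∈ Finset.univ.filter (fun l => l < j), w j i l * z l x
            = ∑ l ∈ Finset.univ.filter (fun l => l < j), w j i l * P l x
              - ∑ l ∈ Finset.univ.filter (fun l => l < j),
                  w j i l * (∑ l' : Fin s, Cmat w (l : ℕ) l' * P l' x)
              - ∑ l ∈ Finset.univ.filter (fun l => l < j),
                  w j i l * (∑ m, gamv a w (l : ℕ) m * x m) := by
          rw [← Finset.sum_sub_distrib, ← Finset.sum_sub_distrib]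
          refine Finset.sum_congr rfl fun l hl => ?_
          have hlj : (l : ℕ) < (j : ℕ) := Fin.lt_def.mp (Finset.mem_filter.mp hl).2
          rw [ih l (by omega) x, hQfa]
          ring
        rw [e1, e2, e3, hQfa]
        ring
      have hg1 := hz j x
      have hg2 := hP j x
      have hg3 : IsGreatest (Set.range fun i : Fin k =>
          ∑ m, alphaNew a w j i m * x m
            + ∑ l ∈ Finset.univ.filter (fun l => l < j), Anew a w j i l * P l x)
          (z j x + Qf j x) := by
        constructor
        · obtain ⟨i, hi⟩ := hg1.1
          refine ⟨i, ?_⟩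
          dsimp only at hi ⊢
          rw [hE i, hi]
        · rintro y ⟨i, rfl⟩
          dsimp only
          rw [hE i]
          have h4 := hg1.2 ⟨i, rfl⟩
          dsimp only at h4
          linarith
      have hun := hg3.unique hg2
      linarith
  refine ⟨P ⟨s - 1, Nat.sub_lt hs Nat.one_pos⟩, Qf ⟨s - 1, Nat.sub_lt hs Nat.one_pos⟩, ?_, ?_, ?_⟩
  · exact ⟨alphaNew a w, Anew a w, alphaNew_nonneg a w, Anew_nonneg a w, P, hs, hP, rfl⟩
  · refine ⟨(fun jj i => if (jj : ℕ) = s - 1 then gamv a w (jj : ℕ) else alphaNew a w jj i),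
      (fun jj i => if (jj : ℕ) = s - 1 then Cmat w (jj : ℕ) else Anew a w jj i), ?_, ?_, ?_⟩
    · intro jj i m
      dsimp only
      by_cases hjj : (jj : ℕ) = s - 1
      · rw [if_pos hjj]; exact gamv_nonneg a w _ m
      · rw [if_neg hjj]; exact alphaNew_nonneg a w jj i m
    · intro jj i l
      dsimp only
      by_cases hjj : (jj : ℕ) = s - 1
      · rw [if_pos hjj]; exact Cmat_nonneg w _ l
      · rw [if_neg hjj]; exact Anew_nonneg a w jj i l
    · refine ⟨(fun jj => if (jj : ℕ) = s - 1 then Qf jj else P jj), hs, ?_, ?_⟩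
      · intro jj x
        dsimp only
        have hul : ∀ l ∈ Finset.univ.filter (fun l => l < jj),
            (if (l : ℕ) = s - 1 then Qf l else P l) = P l := by
          intro l hl
          have h1 : (l : ℕ) < (jj : ℕ) := Fin.lt_def.mp (Finset.mem_filter.mp hl).2
          have h2 : (jj : ℕ) < s := jj.isLt
          rw [if_neg (by omega)]
        by_cases hjj : (jj : ℕ) = s - 1
        · have hrow : ∀ i : Fin k,
              (∑ m, (if (jj : ℕ) = s - 1 then gamv a w (jj : ℕ) else alphaNew a w jj i) m * x m
               + ∑ l ∈ Finset.univ.filter (fun l => l < jj),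
                  (if (jj : ℕ) = s - 1 then Cmat w (jj : ℕ) else Anew a w jj i) l
                    * (if (l : ℕ) = s - 1 then Qf l else P l) x)
              = Qf jj x := by
            intro i
            rw [if_pos hjj, if_pos hjj]
            have : ∑ l ∈ Finset.univ.filter (fun l => l < jj),
                Cmat w (jj : ℕ) l * (if (l : ℕ) = s - 1 then Qf l else P l) x
                = ∑ l' : Fin s, Cmat w (jj : ℕ) l' * P l' x := by
              rw [← hCs jj jj x le_rfl]
              exact Finset.sum_congr rfl fun l hl => by rw [hul l hl]
            rw [this, hQfa]
            ring
          rw [show (if (jj : ℕ) = s - 1 then Qf jj else P jj) = Qf jj from if_pos hjj]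
          constructor
          · exact ⟨⟨0, hk⟩, hrow _⟩
          · rintro y ⟨i, rfl⟩
            exact le_of_eq (hrow i)
        · have hfun : (fun i : Fin k =>
              ∑ m, (if (jj : ℕ) = s - 1 then gamv a w (jj : ℕ) else alphaNew a w jj i) m * x m
               + ∑ l ∈ Finset.univ.filter (fun l => l < jj),
                  (if (jj : ℕ) = s - 1 then Cmat w (jj : ℕ) else Anew a w jj i) l
                    * (if (l : ℕ) = s - 1 then Qf l else P l) x)
              = (fun i : Fin k => ∑ m, alphaNew a w jj i m * x m
                  + ∑ l ∈ Finset.univ.filter (fun l => l < jj), Anew a w jj i l * P l x) := by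
            funext i
            rw [if_neg hjj, if_neg hjj]
            congr 1
            exact Finset.sum_congr rfl fun l hl => by rw [hul l hl]
          rw [show (if (jj : ℕ) = s - 1 then Qf jj else P jj) = P jj from if_neg hjj]
          rw [hfun]
          exact hP jj x
      · exact (if_pos rfl).symm
  · funext x
    have := main s ⟨s - 1, Nat.sub_lt hs Nat.one_pos⟩ (Nat.sub_lt hs Nat.one_pos) x
    rw [hfz]
    simpa using this
end

section
/- If a function f : ℝ^d → ℝ is computed by a monotone rank-k maxout network of size s ≥ 1, then the epigraph epi(f) = {(x,t) ∈ ℝ^d × ℝ : t ≥ f(x)} is a polyhedron with extension complexity xc(epi(f)) ≤ k·s. Concretely, the set {(x, t, y) ∈ ℝ^d × ℝ × ℝ^{s-1} : y_j ≥ Σ_{m=1}^d a^i_{m,j} x_m + Σ_{l<j} w^i_{l,j} y_l for all i = 1,…,k and all j = 1,…,s}, where y_s is identified with t, projects onto epi(f) and is described by k·s inequalities. -/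
open Finset Pointwise

open Finset in
theorem maxout_image_epi {d k s : ℕ} (hs : 1 ≤ s)
    (a : Fin s → Fin k → Fin d → ℝ) (w : Fin s → Fin k → Fin s → ℝ)
    (hw : ∀ j i l, 0 ≤ w j i l)
    (f : (Fin d → ℝ) → ℝ)
    (z : Fin s → (Fin d → ℝ) → ℝ)
    (hgreat : ∀ j x, IsGreatest (Set.range fun i : Fin k =>
        ∑ m, a j i m * x m +
        ∑ l ∈ Finset.univ.filter (fun l => l < j), w j i l * z l x) (z j x))
    (hfz : f = z ⟨s - 1, Nat.sub_lt hs Nat.one_pos⟩) :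
    ((fun p : (Fin d → ℝ) × (Fin s → ℝ) =>
          Fin.snoc p.1 (p.2 ⟨s - 1, Nat.sub_lt hs Nat.one_pos⟩)) ''
        {p : (Fin d → ℝ) × (Fin s → ℝ) | ∀ (j : Fin s) (i : Fin k),
          ∑ m, a j i m * p.1 m +
            ∑ l ∈ Finset.univ.filter (fun l => l < j), w j i l * p.2 l ≤ p.2 j}
      = epiSet f) := by
  set j₀ : Fin s := ⟨s - 1, Nat.sub_lt hs Nat.one_pos⟩ with hj₀
  -- forward key lemma
  have key : ∀ (p : (Fin d → ℝ) × (Fin s → ℝ)),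
      (∀ (j : Fin s) (i : Fin k),
          ∑ m, a j i m * p.1 m +
            ∑ l ∈ Finset.univ.filter (fun l => l < j), w j i l * p.2 l ≤ p.2 j) →
      ∀ j : Fin s, z j p.1 ≤ p.2 j := by
    intro p hp
    have H : ∀ n : ℕ, ∀ j : Fin s, (j : ℕ) = n → z j p.1 ≤ p.2 j := by
      intro n
      induction n using Nat.strong_induction_on with
      | _ n ih =>
        intro j hj
        obtain ⟨i₀, hi₀⟩ := (hgreat j p.1).1
        have step : (fun i : Fin k =>
            ∑ m, a j i m * p.1 m +
              ∑ l ∈ Finset.univ.filter (fun l => l < j), w j i l * z l p.1) i₀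
            ≤ ∑ m, a j i₀ m * p.1 m +
              ∑ l ∈ Finset.univ.filter (fun l => l < j), w j i₀ l * p.2 l := by
          simp only
          gcongr with l hl
          · exact hw j i₀ l
          · exact ih l (hj ▸ (Finset.mem_filter.mp hl).2) l rfl
        calc z j p.1 = _ := hi₀.symm
          _ ≤ _ := step
          _ ≤ p.2 j := hp j i₀
    exact fun j => H j j rfl
  ext q
  constructor
  · rintro ⟨p, hp, rfl⟩
    have h1 : z j₀ p.1 ≤ p.2 j₀ := key p hp j₀
    show Fin.snoc p.1 (p.2 j₀) ∈ epiSet f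
    simp only [epiSet, Set.mem_setOf_eq]
    have hx : (fun m : Fin d => (Fin.snoc p.1 (p.2 j₀) : Fin (d+1) → ℝ) m.castSucc) = p.1 := by
      funext m; exact Fin.snoc_castSucc _ _ m
    rw [hx, Fin.snoc_last, hfz]
    exact h1
  · intro hq
    set x : Fin d → ℝ := fun m => q m.castSucc with hxdef
    set t : ℝ := q (Fin.last d) with htdef
    have hq' : f x ≤ t := hq
    refine ⟨(x, fun j => if j = j₀ then t else z j x), ?_, ?_⟩
    · intro j i
      have hul : ∀ l : Fin s, l < j →
          (if l = j₀ then t else z l x) = z l x := by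
        intro l hl
        have hlj : (l : ℕ) < (j : ℕ) := hl
        have hj : (j : ℕ) ≤ s - 1 := Nat.le_sub_one_of_lt j.isLt
        have hne : l ≠ j₀ := by
          intro h
          have : (l : ℕ) = s - 1 := by rw [h]
          omega
        simp [hne]
      have hsum : ∑ l ∈ Finset.univ.filter (fun l => l < j),
            w j i l * (if l = j₀ then t else z l x)
          = ∑ l ∈ Finset.univ.filter (fun l => l < j), w j i l * z l x := by
        refine Finset.sum_congr rfl fun l hl => ?_
        rw [hul l (Finset.mem_filter.mp hl).2]
      show ∑ m, a j i m * x m + _ ≤ _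
      rw [hsum]
      have hzj : ∑ m, a j i m * x m +
          ∑ l ∈ Finset.univ.filter (fun l => l < j), w j i l * z l x ≤ z j x :=
        (hgreat j x).2 ⟨i, rfl⟩
      by_cases hj : j = j₀
      · subst hj
        simp only [if_pos rfl]
        refine hzj.trans ?_
        rw [← hfz]
        exact hq'
      · simp only [if_neg hj]
        exact hzj
    · show Fin.snoc x (if j₀ = j₀ then t else z j₀ x) = q
      rw [if_pos rfl]
      have : q = Fin.snoc (Fin.init q) (q (Fin.last d)) := (Fin.snoc_init_self q).symm
      rw [this]
      rfl


def projIdx (d s : ℕ) (hs : 1 ≤ s) : Fin (d + 1) → Fin (d + s) := fun q =>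
  if h : (q : ℕ) < d then ⟨q, by omega⟩ else ⟨d + (s - 1), by omega⟩

open Finset in
theorem maxout_extform {d k s : ℕ} (hs : 1 ≤ s)
    (a : Fin s → Fin k → Fin d → ℝ) (w : Fin s → Fin k → Fin s → ℝ) :
    HasExtFormOfSize
      ((fun p : (Fin d → ℝ) × (Fin s → ℝ) =>
          Fin.snoc p.1 (p.2 ⟨s - 1, Nat.sub_lt hs Nat.one_pos⟩)) ''
        {p : (Fin d → ℝ) × (Fin s → ℝ) | ∀ (j : Fin s) (i : Fin k),
          ∑ m, a j i m * p.1 m +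
            ∑ l ∈ Finset.univ.filter (fun l => l < j), w j i l * p.2 l ≤ p.2 j})
      (k * s) := by
  set j₀ : Fin s := ⟨s - 1, Nat.sub_lt hs Nat.one_pos⟩ with hj₀
  set A : Matrix (Fin (k * s)) (Fin (d + s)) ℝ := Matrix.of fun r c =>
    Sum.elim (fun m => a (finProdFinEquiv.symm r).2 (finProdFinEquiv.symm r).1 m)
      (fun l => (if l < (finProdFinEquiv.symm r).2 then
            w (finProdFinEquiv.symm r).2 (finProdFinEquiv.symm r).1 l else 0)
        - (if l = (finProdFinEquiv.symm r).2 then 1 else 0)) (finSumFinEquiv.symm c)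
    with hA
  set g : Fin (d + 1) → Fin (d + s) := projIdx d s hs with hg
  set π : (Fin (d + s) → ℝ) →ᵃ[ℝ] (Fin (d + 1) → ℝ) :=
    (LinearMap.funLeft ℝ ℝ g).toAffineMap with hπdef
  have hmv : ∀ (y : Fin (d + s) → ℝ) (i : Fin k) (j : Fin s),
      A.mulVec y (finProdFinEquiv (i, j)) =
        ∑ m, a j i m * y (Fin.castAdd s m) +
          (∑ l ∈ Finset.univ.filter (fun l => l < j), w j i l * y (Fin.natAdd d l)
            - y (Fin.natAdd d j)) := by
    intro y i j
    have h0 : A.mulVec y (finProdFinEquiv (i, j))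
        = ∑ c, A (finProdFinEquiv (i, j)) c * y c := rfl
    rw [h0, Fin.sum_univ_add]
    simp only [hA, Matrix.of_apply, finSumFinEquiv_symm_apply_castAdd,
      finSumFinEquiv_symm_apply_natAdd, Equiv.symm_apply_apply, Sum.elim_inl, Sum.elim_inr]
    congr 1
    simp only [sub_mul, Finset.sum_sub_distrib, ite_mul, zero_mul, one_mul]
    rw [Finset.sum_ite_eq' Finset.univ j, if_pos (Finset.mem_univ j), ← Finset.sum_filter]
  have hmem : ∀ y : Fin (d + s) → ℝ, A.mulVec y ≤ 0 ↔
      ∀ (j : Fin s) (i : Fin k),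
        ∑ m, a j i m * y (Fin.castAdd s m) +
          ∑ l ∈ Finset.univ.filter (fun l => l < j), w j i l * y (Fin.natAdd d l)
          ≤ y (Fin.natAdd d j) := by
    intro y
    constructor
    · intro h j i
      have h2 := h (finProdFinEquiv (i, j))
      rw [hmv] at h2
      have h3 : (0 : Fin (k * s) → ℝ) (finProdFinEquiv (i, j)) = 0 := rfl
      rw [h3] at h2
      linarith
    · intro h r
      obtain ⟨⟨i, j⟩, rfl⟩ := finProdFinEquiv.surjective r
      rw [hmv]
      show _ ≤ (0 : ℝ)
      have := h j i
      linarith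
  have hπ : ∀ y : Fin (d + s) → ℝ,
      π y = Fin.snoc (fun m => y (Fin.castAdd s m)) (y (Fin.natAdd d j₀)) := by
    intro y
    have hy : π y = y ∘ g := by
      rw [hπdef]
      simp [LinearMap.funLeft]
    rw [hy]
    funext q
    refine Fin.lastCases ?_ (fun m => ?_) q
    · rw [Fin.snoc_last]
      show y (g (Fin.last d)) = _
      have : g (Fin.last d) = Fin.natAdd d j₀ := by
        simp only [hg, projIdx, Fin.val_last, lt_irrefl, dif_neg, not_lt, le_refl]
        rfl
      rw [this]
    · rw [Fin.snoc_castSucc]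
      show y (g m.castSucc) = _
      have : g m.castSucc = Fin.castAdd s m := by
        simp only [hg, projIdx, Fin.coe_castSucc]
        rw [dif_pos m.isLt]
        rfl
      rw [this]
  refine ⟨d + s, 0, A, 0, 0, 0, π, ?_⟩
  ext q
  constructor
  · rintro ⟨y, ⟨hy, -⟩, rfl⟩
    exact ⟨(fun m => y (Fin.castAdd s m), fun l => y (Fin.natAdd d l)),
      fun j i => (hmem y).1 hy j i, (hπ y).symm⟩
  · rintro ⟨p, hp, rfl⟩
    refine ⟨fun c => Sum.elim p.1 p.2 (finSumFinEquiv.symm c), ⟨?_, ?_⟩, ?_⟩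
    · refine (hmem _).2 fun j i => ?_
      simp only [finSumFinEquiv_symm_apply_castAdd, finSumFinEquiv_symm_apply_natAdd,
        Sum.elim_inl, Sum.elim_inr]
      exact hp j i
    · funext i
      exact i.elim0
    · rw [hπ]
      simp only [finSumFinEquiv_symm_apply_castAdd, finSumFinEquiv_symm_apply_natAdd,
        Sum.elim_inl, Sum.elim_inr]

/-- the epigraph of a function computed by a monotone rank-`k` maxout network of
size `s ≥ 1` has extension complexity at most `k·s`; concretely, the system
`y_j ≥ Σ_m a^i_{m,j} x_m + Σ_{l<j} w^i_{l,j} y_l` (with `y_s` identified with `t`)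
projects onto `epi(f)` and consists of `k·s` inequalities. -/
theorem xc_epigraph_monotone_maxout {d k s : ℕ} (hs : 1 ≤ s)
    (a : Fin s → Fin k → Fin d → ℝ) (w : Fin s → Fin k → Fin s → ℝ)
    (ha : ∀ j i m, 0 ≤ a j i m) (hw : ∀ j i l, 0 ≤ w j i l)
    (f : (Fin d → ℝ) → ℝ) (hf : MaxoutComputes k s a w f) :
    ((fun p : (Fin d → ℝ) × (Fin s → ℝ) =>
          Fin.snoc p.1 (p.2 ⟨s - 1, Nat.sub_lt hs Nat.one_pos⟩)) ''
        {p : (Fin d → ℝ) × (Fin s → ℝ) | ∀ (j : Fin s) (i : Fin k),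
          ∑ m, a j i m * p.1 m +
            ∑ l ∈ Finset.univ.filter (fun l => l < j), w j i l * p.2 l ≤ p.2 j}
      = epiSet f) ∧
    ∃ m ≤ k * s, HasExtFormOfSize (epiSet f) m := by
  obtain ⟨z, hs', hgreat, hfz⟩ := hf
  have h1 := maxout_image_epi hs a w hw f z hgreat hfz
  refine ⟨h1, k * s, le_refl _, ?_⟩
  rw [← h1]
  exact maxout_extform hs a w
end

section
/- Consider a monotone maxout network of size s in which the j-th unit has its own rank k_j ≥ 2, i.e., f = z_s where z_j(x) = max_{i=1,…,k_j} ( Σ_{m=1}^d a^i_{m,j} x_m + Σ_{l<j} w^i_{l,j} z_l(x) ) with all weights nonnegative. Then the epigraph epi(f) = {(x,t) ∈ ℝ^d × ℝ : t ≥ f(x)} satisfies xc(epi(f)) ≤ Σ_{j=1}^{s} k_j. -/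
open Finset Pointwise

/-! Lift every unit value `z_j(x)` to a variable `t_j` and impose the `Σ_j k_j` linear inequalities
`a^i_j · x + Σ_{l<j} w^i_{l,j} t_l ≤ t_j`. As the weights `w` are nonnegative, induction over the
units gives `z_j(x) ≤ t_j` for every solution; conversely `(z_1(x), …, z_{s-1}(x), τ)` is a solution
whenever `z_s(x) ≤ τ`, since `t_s` occurs in no constraint of another unit. Hence the projection
`(x, t) ↦ (x, t_s)` maps this polyhedron onto `epi(f)`. -/

theorem hasExtFormOfSize_image_inequalities {d : ℕ} {ι κ : Type*} [Fintype ι] [Fintype κ]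
    (r : ι → κ → ℝ) (b : ι → ℝ) (π : (κ → ℝ) →ᵃ[ℝ] (Fin d → ℝ)) :
    HasExtFormOfSize (π '' {y | ∀ i, ∑ c, r i c * y c ≤ b i}) (Fintype.card ι) := by
  let eι := Fintype.equivFin ι
  let eκ := Fintype.equivFin κ
  let L := LinearEquiv.funCongrLeft ℝ ℝ eκ
  let A := Matrix.of fun i c => r (eι.symm i) (eκ.symm c)
  refine ⟨Fintype.card κ, 0, A, b ∘ eι.symm, 0, 0, π.comp L.toLinearMap.toAffineMap, ?_⟩
  have hS : {y | A.mulVec y ≤ b ∘ eι.symm ∧ (0 : Matrix (Fin 0) _ ℝ).mulVec y = 0} =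
      L ⁻¹' {y | ∀ i, ∑ c, r i c * y c ≤ b i} := by
    ext y
    simp only [Set.mem_ofPred_eq, Set.mem_preimage, Subsingleton.elim _ (0 : Fin 0 → ℝ), and_true,
      Pi.le_def, eι.symm.forall_congr_left]
    refine forall_congr' fun i => ?_
    simp only [Matrix.mulVec, dotProduct, A, Matrix.of_apply, Function.comp_apply, L,
      LinearEquiv.funCongrLeft_apply, Equiv.symm_symm,
      LinearMap.funLeft_apply, ← eκ.sum_comp, Equiv.symm_apply_apply]
  rw [AffineMap.coe_comp, Set.image_comp, hS]
  exact congrArg _ (Set.image_preimage_eq _ L.surjective)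

section Maxout

variable {d s : ℕ} {k : Fin s → ℕ} (a : (j : Fin s) → Fin (k j) → Fin d → ℝ)
  (w : (j : Fin s) → Fin (k j) → Fin s → ℝ)

def IsMaxoutSupersolution (x : Fin d → ℝ) (t : Fin s → ℝ) : Prop :=
  ∀ j i, ∑ m, a j i m * x m + ∑ l ∈ univ.filter (· < j), w j i l * t l ≤ t j

def maxoutRow (σ : Σ j, Fin (k j)) : Fin d ⊕ Fin s → ℝ :=
  Sum.elim (a σ.1 σ.2) (fun l => if l < σ.1 then w σ.1 σ.2 l else 0) - Pi.single (Sum.inr σ.1) 1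

theorem isMaxoutSupersolution_iff_maxoutRow (y : Fin d ⊕ Fin s → ℝ) :
    IsMaxoutSupersolution a w (y ∘ Sum.inl) (y ∘ Sum.inr) ↔
      ∀ σ, ∑ c, maxoutRow a w σ c * y c ≤ 0 := by
  rw [Sigma.forall]
  refine forall₂_congr fun j i => ?_
  simp [maxoutRow, sub_mul, sum_sub_distrib, Fintype.sum_sum_type, ite_mul, sum_filter,
    Pi.single_apply]

def maxoutProj (j₀ : Fin s) : (Fin d ⊕ Fin s → ℝ) →ₗ[ℝ] (Fin (d + 1) → ℝ) :=
  LinearMap.funLeft ℝ ℝ (Fin.lastCases (Sum.inr j₀) Sum.inl)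

variable {a w} {z : Fin s → (Fin d → ℝ) → ℝ}
  (hz : ∀ j x, IsGreatest (Set.range fun i : Fin (k j) =>
    ∑ m, a j i m * x m + ∑ l ∈ univ.filter (· < j), w j i l * z l x) (z j x))
include hz

theorem IsMaxoutSupersolution.le (hw : ∀ j i l, 0 ≤ w j i l) {x : Fin d → ℝ} {t : Fin s → ℝ}
    (ht : IsMaxoutSupersolution a w x t) (j : Fin s) : z j x ≤ t j := by
  induction j using WellFoundedLT.induction with
  | ind j ih =>
    obtain ⟨i, hi⟩ := (hz j x).1
    calc z j x = ∑ m, a j i m * x m + ∑ l ∈ univ.filter (· < j), w j i l * z l x := hi.symm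
      _ ≤ ∑ m, a j i m * x m + ∑ l ∈ univ.filter (· < j), w j i l * t l := by
        gcongr with l hl
        · exact hw j i l
        · exact ih l (mem_filter.1 hl).2
      _ ≤ t j := ht j i

theorem isMaxoutSupersolution_update {j₀ : Fin s} (hj₀ : IsMax j₀) (x : Fin d → ℝ) {τ : ℝ}
    (hτ : z j₀ x ≤ τ) : IsMaxoutSupersolution a w x (Function.update (z · x) j₀ τ) := by
  intro j i
  have hbelow : ∑ l ∈ univ.filter (· < j), w j i l * Function.update (z · x) j₀ τ l =
      ∑ l ∈ univ.filter (· < j), w j i l * z l x := sum_congr rfl fun l hl => by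
    rw [Function.update_of_ne (fun h => (h ▸ hj₀).not_lt (mem_filter.1 hl).2)]
  rw [hbelow]
  refine ((hz j x).2 ⟨i, rfl⟩).trans ?_
  rcases eq_or_ne j j₀ with rfl | hj
  · simpa using hτ
  · simp [hj]

theorem epiSet_eq_image_maxoutProj (hw : ∀ j i l, 0 ≤ w j i l) {j₀ : Fin s} (hj₀ : IsMax j₀) :
    epiSet (z j₀) =
      maxoutProj j₀ '' {y | IsMaxoutSupersolution a w (y ∘ Sum.inl) (y ∘ Sum.inr)} := by
  ext p
  constructor
  · intro hp
    let x : Fin d → ℝ := fun m => p m.castSucc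
    refine ⟨Sum.elim x (Function.update (z · x) j₀ (p (Fin.last d))),
      isMaxoutSupersolution_update hz hj₀ x hp, funext fun n => ?_⟩
    refine Fin.lastCases ?_ (fun m => ?_) n <;>
      simp only [maxoutProj, LinearMap.funLeft_apply, Fin.lastCases_last, Fin.lastCases_castSucc,
        Sum.elim_inr, Sum.elim_inl, Function.update_self, x]
  · rintro ⟨y, hy, rfl⟩
    simpa [epiSet, maxoutProj, Function.comp_def] using hy.le hz hw j₀

end Maxout

theorem xc_epigraph_monotone_maxout_varrank_general {d s : ℕ} (hs : 0 < s)
    (k : Fin s → ℕ)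
    (a : (j : Fin s) → Fin (k j) → Fin d → ℝ)
    (w : (j : Fin s) → Fin (k j) → Fin s → ℝ)
    (hw : ∀ j i l, 0 ≤ w j i l)
    (z : Fin s → (Fin d → ℝ) → ℝ)
    (hz : ∀ j x, IsGreatest (Set.range fun i : Fin (k j) =>
        ∑ m, a j i m * x m +
          ∑ l ∈ Finset.univ.filter (fun l => l < j), w j i l * z l x) (z j x))
    (f : (Fin d → ℝ) → ℝ) (hf : f = z ⟨s - 1, Nat.sub_lt hs Nat.one_pos⟩) :
    ∃ m ≤ ∑ j, k j, HasExtFormOfSize (epiSet f) m := by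
  have hlast : IsMax (⟨s - 1, Nat.sub_lt hs Nat.one_pos⟩ : Fin s) := fun j _ =>
    Fin.le_def.2 (Nat.le_sub_one_of_lt j.isLt)
  refine ⟨Fintype.card (Σ j, Fin (k j)), by simp, ?_⟩
  rw [hf, epiSet_eq_image_maxoutProj hz hw hlast]
  simp_rw [isMaxoutSupersolution_iff_maxoutRow]
  exact hasExtFormOfSize_image_inequalities (maxoutRow a w) 0 (maxoutProj _).toAffineMap

/-- for a monotone maxout network of size `s` with unit-dependent ranks
`k j ≥ 2`, the epigraph of the computed function has extension complexity at most `Σ_j k j`. -/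
theorem xc_epigraph_monotone_maxout_varrank {d s : ℕ} (hs : 0 < s)
    (k : Fin s → ℕ) (hk : ∀ j, 2 ≤ k j)
    (a : (j : Fin s) → Fin (k j) → Fin d → ℝ)
    (w : (j : Fin s) → Fin (k j) → Fin s → ℝ)
    (ha : ∀ j i m, 0 ≤ a j i m) (hw : ∀ j i l, 0 ≤ w j i l)
    (z : Fin s → (Fin d → ℝ) → ℝ)
    (hz : ∀ j x, IsGreatest (Set.range fun i : Fin (k j) =>
        ∑ m, a j i m * x m +
          ∑ l ∈ Finset.univ.filter (fun l => l < j), w j i l * z l x) (z j x))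
    (f : (Fin d → ℝ) → ℝ) (hf : f = z ⟨s - 1, Nat.sub_lt hs Nat.one_pos⟩) :
    ∃ m ≤ ∑ j, k j, HasExtFormOfSize (epiSet f) m :=
  xc_epigraph_monotone_maxout_varrank_general hs k a w hw z hz f hf
end

section
/- For every polytope P ⊆ ℝ^d with dim(P) ≥ 1 (i.e., P contains at least two distinct points), the extension complexity of P equals the extension complexity of the epigraph of its support function: xc(P) = xc(epi(f_P)), where epi(f_P) = {(c,t) ∈ ℝ^d × ℝ : t ≥ f_P(c)}. -/
open Finset Pointwise

/-!
Write an extension of `P` as `P = π {y | A y ≤ b, C y = d}` with `π y = N y + p`. By LP duality,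
`c ⬝ x ≤ t` holds on `P` iff there are `λ ≥ 0` and `μ` with `λ A + μ C = c N` and
`λ b + μ d + c p ≤ t`. As `P` is not a point, the sum of the dual solutions for `c` and `-c`, with
`c` separating two points of `P`, is a certificate `λ₀ ≥ 0`, `μ₀` with `λ₀ A + μ₀ C = 0` and
positive value; its multiples absorb any slack, so `epi f_P` is the image of
`{(c, μ, λ) | λ ≥ 0, λ A + μ C = c N}`, which uses only the `m` inequalities `λ ≥ 0`.
Conversely, `x ∈ P` iff `(x, -1) ⬝ u ≤ 0` on `epi f_P`, and LP duality over an extension of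
`epi f_P` turns this into a system whose only inequalities are again `λ ≥ 0`; the dual value is
exactly `0` because `0 ∈ epi f_P`. Farkas' lemma is proved by Bartl's induction on the number of
inequalities.
-/

theorem Module.Dual.exists_eq_comp_of_ker_le {K V W : Type*} [Field K] [AddCommGroup V]
    [Module K V] [AddCommGroup W] [Module K W] {L : V →ₗ[K] W} {c : Module.Dual K V}
    (h : LinearMap.ker L ≤ LinearMap.ker c) : ∃ φ : Module.Dual K W, c = φ ∘ₗ L := by
  have hc : c ∈ LinearMap.range L.dualMap := by
    rw [LinearMap.range_dualMap_eq_dualAnnihilator_ker]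
    exact (Submodule.mem_dualAnnihilator c).2 fun x hx => h hx
  obtain ⟨φ, rfl⟩ := hc
  exact ⟨φ, rfl⟩

section Farkas

variable {𝕜 V W ι : Type*} [Field 𝕜] [LinearOrder 𝕜] [IsStrictOrderedRing 𝕜]
  [AddCommGroup V] [Module 𝕜 V] [AddCommGroup W] [Module 𝕜 W]

open Module

theorem forall_sub_smul_nonpos_of_forall_nonpos [DecidableEq ι] {L : V →ₗ[𝕜] W}
    {a : ι → Dual 𝕜 V} {c : Dual 𝕜 V} {j : ι} {s : Finset ι}
    (h : ∀ x, L x = 0 → (∀ i ∈ insert j s, a i x ≤ 0) → c x ≤ 0) {x₀ : V} (hLx₀ : L x₀ = 0)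
    (hajx₀ : 0 < a j x₀) (x : V) (hLx : L x = 0)
    (hax : ∀ i ∈ s, (a i - (a i x₀ / a j x₀) • a j) x ≤ 0) :
    (c - (c x₀ / a j x₀) • a j) x ≤ 0 := by
  have key := h (x - (a j x / a j x₀) • x₀) (by simp [hLx, hLx₀]) (by
    simp only [Finset.mem_insert, forall_eq_or_imp, map_sub, map_smul, smul_eq_mul]
    refine ⟨by field_simp; simp, fun i hi => ?_⟩
    have := hax i hi
    simp only [LinearMap.sub_apply, LinearMap.smul_apply, smul_eq_mul] at this
    linarith [show a j x / a j x₀ * a i x₀ = a i x₀ / a j x₀ * a j x by ring])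
  simp only [map_sub, map_smul, smul_eq_mul] at key
  simp only [LinearMap.sub_apply, LinearMap.smul_apply, smul_eq_mul]
  linarith [show a j x / a j x₀ * c x₀ = c x₀ / a j x₀ * a j x by ring]

theorem exists_nonneg_sum_smul_add_comp_of_forall_nonpos (L : V →ₗ[𝕜] W) (a : ι → Dual 𝕜 V)
    (c : Dual 𝕜 V) (s : Finset ι) (h : ∀ x, L x = 0 → (∀ i ∈ s, a i x ≤ 0) → c x ≤ 0) :
    ∃ (l : ι → 𝕜) (φ : Dual 𝕜 W), (∀ i, 0 ≤ l i) ∧ c = ∑ i ∈ s, l i • a i + φ ∘ₗ L := by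
  classical
  induction s using Finset.induction_on generalizing a c with
  | empty =>
    obtain ⟨φ, hφ⟩ := Dual.exists_eq_comp_of_ker_le fun x hx => le_antisymm
      (h x hx (by simp)) (by simpa using h (-x) (by simp [LinearMap.mem_ker.1 hx]) (by simp))
    exact ⟨0, φ, fun _ => le_rfl, by simpa using hφ⟩
  | insert j s hj ih =>
    suffices ∃ t : 𝕜, 0 ≤ t ∧ ∃ (l : ι → 𝕜) (φ : Dual 𝕜 W), (∀ i, 0 ≤ l i) ∧
        c = t • a j + ∑ i ∈ s, l i • a i + φ ∘ₗ L by
      obtain ⟨t, ht, l, φ, hl, rfl⟩ := this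
      refine ⟨Function.update l j t, φ, fun i => ?_, ?_⟩
      · rcases eq_or_ne i j with rfl | hi
        · simpa using ht
        · simpa [hi] using hl i
      · rw [Finset.sum_insert hj, Function.update_self]
        congr 2
        exact Finset.sum_congr rfl fun i hi => by
          rw [Function.update_of_ne (ne_of_mem_of_not_mem hi hj)]
    by_cases hs : ∀ x, L x = 0 → (∀ i ∈ s, a i x ≤ 0) → c x ≤ 0
    · obtain ⟨l, φ, hl, hc⟩ := ih a c hs
      exact ⟨0, le_rfl, l, φ, hl, by simpa using hc⟩
    push Not at hs
    obtain ⟨x₀, hLx₀, hax₀, hcx₀⟩ := hs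
    have hajx₀ : 0 < a j x₀ := by
      by_contra! hle
      exact hcx₀.not_ge <| h x₀ hLx₀ <| by simpa [hle] using hax₀
    -- Bartl: project the other constraints along `x₀` onto the hyperplane `a j = 0`.
    obtain ⟨l, φ, hl, hc'⟩ := ih _ _ (forall_sub_smul_nonpos_of_forall_nonpos h hLx₀ hajx₀)
    have hsum : ∑ i ∈ s, l i * a i x₀ ≤ 0 :=
      Finset.sum_nonpos fun i hi => mul_nonpos_of_nonneg_of_nonpos (hl i) (hax₀ i hi)
    refine ⟨(c x₀ - ∑ i ∈ s, l i * a i x₀) / a j x₀, div_nonneg (by linarith) hajx₀.le,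
      l, φ, hl, LinearMap.ext fun x => ?_⟩
    have hx := LinearMap.congr_fun hc' x
    simp only [LinearMap.sub_apply, LinearMap.smul_apply, smul_eq_mul, LinearMap.add_apply,
      LinearMap.sum_apply, mul_sub, Finset.sum_sub_distrib] at hx ⊢
    have hsum' : ∑ i ∈ s, l i * (a i x₀ / a j x₀ * a j x)
        = (∑ i ∈ s, l i * a i x₀) / a j x₀ * a j x := by
      rw [Finset.sum_div, Finset.sum_mul]
      exact Finset.sum_congr rfl fun i _ => by ring
    rw [hsum'] at hx
    linear_combination hx

theorem apply_nonpos_of_forall_le {a : ι → Dual 𝕜 V} {β : ι → 𝕜} {L : V →ₗ[𝕜] W} {w : W}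
    {c : Dual 𝕜 V} {v : 𝕜} {x₀ : V} (hax₀ : ∀ i, a i x₀ ≤ β i) (hLx₀ : L x₀ = w)
    (h : ∀ x, (∀ i, a i x ≤ β i) → L x = w → c x ≤ v) {x : V} (hax : ∀ i, a i x ≤ 0)
    (hLx : L x = 0) : c x ≤ 0 := by
  by_contra! hcx
  have hv : c x₀ ≤ v := h x₀ hax₀ hLx₀
  set r := (v - c x₀ + 1) / c x
  have hr : 0 ≤ r := div_nonneg (by linarith) hcx.le
  have := h (x₀ + r • x) (fun i => by
    simpa using add_le_of_le_of_nonpos (hax₀ i) (mul_nonpos_of_nonneg_of_nonpos hr (hax i)))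
    (by simp [hLx₀, hLx])
  simp only [map_add, map_smul, smul_eq_mul, r] at this
  rw [div_mul_cancel₀ _ hcx.ne'] at this
  linarith

theorem apply_le_mul_of_forall_le {a : ι → Dual 𝕜 V} {β : ι → 𝕜} {L : V →ₗ[𝕜] W} {w : W}
    {c : Dual 𝕜 V} {v : 𝕜} (hne : ∃ x, (∀ i, a i x ≤ β i) ∧ L x = w)
    (h : ∀ x, (∀ i, a i x ≤ β i) → L x = w → c x ≤ v) {x : V} {t : 𝕜} (ht : 0 ≤ t)
    (hax : ∀ i, a i x ≤ β i * t) (hLx : L x = t • w) : c x ≤ v * t := by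
  rcases ht.eq_or_lt with rfl | ht
  · obtain ⟨x₀, hax₀, hLx₀⟩ := hne
    simpa using apply_nonpos_of_forall_le hax₀ hLx₀ h (by simpa using hax) (by simpa using hLx)
  have := h (t⁻¹ • x) (fun i => by
    rw [map_smul, smul_eq_mul, inv_mul_le_iff₀ ht, mul_comm]; exact hax i)
    (by rw [map_smul, hLx, smul_smul, inv_mul_cancel₀ ht.ne', one_smul])
  rwa [map_smul, smul_eq_mul, inv_mul_le_iff₀ ht, mul_comm] at this

theorem exists_nonneg_sum_smul_add_comp_of_forall_le [Fintype ι] (a : ι → Dual 𝕜 V)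
    (β : ι → 𝕜) (L : V →ₗ[𝕜] W) (w : W) (c : Dual 𝕜 V) (v : 𝕜)
    (hne : ∃ x, (∀ i, a i x ≤ β i) ∧ L x = w)
    (h : ∀ x, (∀ i, a i x ≤ β i) → L x = w → c x ≤ v) :
    ∃ (l : ι → 𝕜) (φ : Dual 𝕜 W), (∀ i, 0 ≤ l i) ∧ c = ∑ i, l i • a i + φ ∘ₗ L ∧
      ∑ i, l i * β i + φ w ≤ v := by
  -- Homogenize: `(x, t)` stands for `x / t`, with the extra constraint `-t ≤ 0`.
  obtain ⟨l, φ, hl, hc⟩ := exists_nonneg_sum_smul_add_comp_of_forall_nonpos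
    (L.coprod (-LinearMap.toSpanSingleton 𝕜 W w))
    (fun o : Option ι => o.elim ((0 : Dual 𝕜 V).coprod (-LinearMap.id))
      fun i => (a i).coprod (-β i • LinearMap.id))
    (c.coprod (-v • LinearMap.id)) Finset.univ fun ⟨x, t⟩ hL ha => by
      have ht := ha none (Finset.mem_univ _)
      have hai i := ha (some i) (Finset.mem_univ _)
      simp only [Option.elim, LinearMap.coprod_apply, LinearMap.neg_apply, LinearMap.smul_apply,
        LinearMap.id_apply, LinearMap.toSpanSingleton_apply, LinearMap.zero_apply, smul_eq_mul,
        ← sub_eq_add_neg, sub_eq_zero, sub_nonpos] at hai hL ht ⊢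
      linarith [apply_le_mul_of_forall_le hne h ht (fun i => by linarith [hai i]) hL]
  have hx := fun x => LinearMap.congr_fun hc (x, 0)
  have h1 := LinearMap.congr_fun hc (0, 1)
  simp only [Fintype.sum_option, Option.elim, LinearMap.add_apply, LinearMap.sum_apply,
    LinearMap.smul_apply, LinearMap.comp_apply, LinearMap.coprod_apply, LinearMap.neg_apply,
    LinearMap.id_apply, LinearMap.toSpanSingleton_apply, LinearMap.zero_apply, smul_eq_mul,
    map_zero, map_neg, one_smul, add_zero, zero_add, mul_zero, mul_one, mul_neg,
    Finset.sum_neg_distrib] at hx h1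
  refine ⟨fun i => l (some i), φ, fun i => hl _, LinearMap.ext fun x => ?_, ?_⟩
  · simpa using hx x
  · linarith [hl none]

end Farkas

namespace Matrix

theorem dotProduct_le_of_vecMul_add_vecMul_eq {R m n k : Type*} [CommSemiring R] [PartialOrder R]
    [IsOrderedRing R] [Fintype m] [Fintype n] [Fintype k] {A : Matrix m n R} {b : m → R}
    {C : Matrix k n R} {d : k → R} {l : m → R} {μ : k → R} {g y : n → R} (hl : 0 ≤ l)
    (hg : l ᵥ* A + μ ᵥ* C = g) (hAy : A *ᵥ y ≤ b) (hCy : C *ᵥ y = d) :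
    g ⬝ᵥ y ≤ l ⬝ᵥ b + μ ⬝ᵥ d := by
  rw [← hg, add_dotProduct, ← dotProduct_mulVec, ← dotProduct_mulVec, hCy]
  exact add_le_add_left (dotProduct_le_dotProduct_of_nonneg_left hAy hl) _

theorem exists_vecMul_add_vecMul_eq_of_forall_le {𝕜 m n k : Type*} [Field 𝕜] [LinearOrder 𝕜]
    [IsStrictOrderedRing 𝕜] [Fintype m] [Fintype n] [DecidableEq n] [Fintype k] [DecidableEq k]
    {A : Matrix m n 𝕜} {b : m → 𝕜} {C : Matrix k n 𝕜} {d : k → 𝕜} {g : n → 𝕜} {v : 𝕜}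
    (hne : ∃ y, A *ᵥ y ≤ b ∧ C *ᵥ y = d) (h : ∀ y, A *ᵥ y ≤ b → C *ᵥ y = d → g ⬝ᵥ y ≤ v) :
    ∃ (l : m → 𝕜) (μ : k → 𝕜), 0 ≤ l ∧ l ᵥ* A + μ ᵥ* C = g ∧ l ⬝ᵥ b + μ ⬝ᵥ d ≤ v := by
  obtain ⟨l, φ, hl, hg, hv⟩ := exists_nonneg_sum_smul_add_comp_of_forall_le
    (fun i => LinearMap.proj i ∘ₗ A.mulVecLin) b C.mulVecLin d (dotProductEquiv 𝕜 n g) v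
    (by simpa [Pi.le_def] using hne) (fun y hAy hCy => h y (by simpa [Pi.le_def] using hAy) hCy)
  set μ := (dotProductEquiv 𝕜 k).symm φ
  have hφ : ∀ z, φ z = μ ⬝ᵥ z := fun z => by
    simp [μ, ← dotProductEquiv_apply_apply]
  refine ⟨l, μ, hl, dotProduct_eq _ _ fun y => ?_, ?_⟩
  · have := LinearMap.congr_fun hg y
    simp only [dotProductEquiv_apply_apply, LinearMap.add_apply, LinearMap.sum_apply,
      LinearMap.smul_apply, LinearMap.comp_apply, LinearMap.proj_apply, mulVecLin_apply,
      smul_eq_mul, hφ] at this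
    rw [this, add_dotProduct, ← dotProduct_mulVec, ← dotProduct_mulVec]
    rfl
  · rwa [hφ] at hv

end Matrix

open Matrix

section Polytope

variable {d : ℕ} {P : Set (Fin d → ℝ)}

theorem IsPolytope.isCompact (hP : IsPolytope P) : IsCompact P := by
  obtain ⟨V, -, rfl⟩ := hP
  exact Set.Finite.isCompact_convexHull ℝ V.finite_toSet

theorem IsPolytope.nonempty (hP : IsPolytope P) : P.Nonempty := by
  obtain ⟨V, hV, rfl⟩ := hP
  exact hV.to_set.mono (subset_convexHull ℝ _)

theorem IsPolytope.convex (hP : IsPolytope P) : Convex ℝ P := by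
  obtain ⟨V, -, rfl⟩ := hP
  exact convex_convexHull ℝ _

theorem IsPolytope.suppFn_le_iff (hP : IsPolytope P) {c : Fin d → ℝ} {t : ℝ} :
    suppFn P c ≤ t ↔ ∀ x ∈ P, c ⬝ᵥ x ≤ t :=
  (csSup_le_iff (hP.isCompact.image (continuous_const.dotProduct continuous_id)).bddAbove
    (hP.nonempty.image _)).trans Set.forall_mem_image

theorem IsPolytope.le_suppFn (hP : IsPolytope P) (c : Fin d → ℝ) {x : Fin d → ℝ} (hx : x ∈ P) :
    c ⬝ᵥ x ≤ suppFn P c :=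
  hP.suppFn_le_iff.1 le_rfl x hx

theorem IsPolytope.suppFn_zero (hP : IsPolytope P) : suppFn P 0 = 0 := by
  simp [suppFn, hP.nonempty.image_const]

theorem IsPolytope.mem_iff_forall_le_suppFn (hP : IsPolytope P) {x : Fin d → ℝ} :
    x ∈ P ↔ ∀ c, c ⬝ᵥ x ≤ suppFn P c := by
  refine ⟨fun hx c => hP.le_suppFn c hx, fun h => ?_⟩
  by_contra hx
  obtain ⟨f, u, hfP, hfx⟩ :=
    geometric_hahn_banach_closed_point hP.convex hP.isCompact.isClosed hx
  set c := (dotProductEquiv ℝ (Fin d)).symm f.toLinearMap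
  have hf : ∀ y, f y = c ⬝ᵥ y := fun y => by
    simp [c, ← dotProductEquiv_apply_apply]
  have := hP.suppFn_le_iff.2 fun y hy => (hf y ▸ hfP y hy).le
  linarith [h c, hf x]

theorem snoc_dotProduct {R : Type*} [Mul R] [AddCommMonoid R] (u : Fin (d + 1) → R) (s : R)
    (c : Fin d → R) :
    Fin.snoc c s ⬝ᵥ u = c ⬝ᵥ Fin.init u + s * u (Fin.last d) := by
  simp [dotProduct, Fin.sum_univ_castSucc, Fin.init]

theorem snoc_mem_epiSet {f : (Fin d → ℝ) → ℝ} {c : Fin d → ℝ} {t : ℝ} :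
    (Fin.snoc c t : Fin (d + 1) → ℝ) ∈ epiSet f ↔ f c ≤ t := by
  simp [epiSet]

theorem IsPolytope.mem_iff_forall_mem_epiSet (hP : IsPolytope P) {x : Fin d → ℝ} :
    x ∈ P ↔ ∀ u ∈ epiSet (suppFn P), (Fin.snoc x (-1) : Fin (d + 1) → ℝ) ⬝ᵥ u ≤ 0 := by
  rw [hP.mem_iff_forall_le_suppFn]
  refine ⟨fun h u hu => ?_, fun h c => ?_⟩
  · have hu : suppFn P (Fin.init u) ≤ u (Fin.last d) := hu
    rw [snoc_dotProduct, dotProduct_comm]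
    linarith [h (Fin.init u)]
  · have := h (Fin.snoc c (suppFn P c)) (snoc_mem_epiSet.2 le_rfl)
    rw [snoc_dotProduct, Fin.init_snoc, Fin.snoc_last, dotProduct_comm] at this
    linarith

end Polytope

def snocLinearMap (R M : Type*) [Semiring R] [AddCommMonoid M] [Module R M] (n : ℕ) :
    (Fin n → M) × M →ₗ[R] (Fin (n + 1) → M) where
  toFun p := Fin.snoc p.1 p.2
  map_add' p q := funext fun i => Fin.lastCases (by simp) (fun i => by simp) i
  map_smul' r p := funext fun i => Fin.lastCases (by simp) (fun i => by simp) i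

@[simp]
theorem snocLinearMap_apply (R M : Type*) [Semiring R] [AddCommMonoid M] [Module R M] (n : ℕ)
    (p : (Fin n → M) × M) : snocLinearMap R M n p = Fin.snoc p.1 p.2 :=
  rfl

theorem hasExtFormOfSize_image {U W : Type*} [AddCommGroup U] [Module ℝ U] [FiniteDimensional ℝ U]
    [AddCommGroup W] [Module ℝ W] [FiniteDimensional ℝ W] {d m : ℕ}
    (L : U × (Fin m → ℝ) →ₗ[ℝ] W) (w : W) (π : U × (Fin m → ℝ) →ᵃ[ℝ] (Fin d → ℝ)) :
    HasExtFormOfSize (π '' {v | 0 ≤ v.2 ∧ L v = w}) m := by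
  set φ := (Module.finBasis ℝ (U × (Fin m → ℝ))).equivFun.symm
  set ψ := (Module.finBasis ℝ W).equivFun
  refine ⟨_, _, LinearMap.toMatrix' (-(LinearMap.snd ℝ U (Fin m → ℝ) ∘ₗ φ.toLinearMap)), 0,
    LinearMap.toMatrix' (ψ.toLinearMap ∘ₗ L ∘ₗ φ.toLinearMap), ψ w,
    π.comp φ.toLinearMap.toAffineMap, ?_⟩
  rw [AffineMap.coe_comp, Set.image_comp]
  congr 1
  ext v
  refine ⟨?_, fun hv => ⟨φ.symm v, ?_, by simp⟩⟩
  · rintro ⟨y, hy, rfl⟩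
    simpa [neg_mulVec, LinearMap.toMatrix'_mulVec, ψ.injective.eq_iff] using hy
  · simpa [neg_mulVec, LinearMap.toMatrix'_mulVec, ψ.injective.eq_iff] using hv

structure ExtendedFormulation (d m : ℕ) where
  e : ℕ
  m' : ℕ
  A : Matrix (Fin m) (Fin e) ℝ
  b : Fin m → ℝ
  C : Matrix (Fin m') (Fin e) ℝ
  d' : Fin m' → ℝ
  π : (Fin e → ℝ) →ᵃ[ℝ] (Fin d → ℝ)

namespace ExtendedFormulation

variable {d m : ℕ} (F : ExtendedFormulation d m)

def polyhedron : Set (Fin F.e → ℝ) :=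
  {y | F.A *ᵥ y ≤ F.b ∧ F.C *ᵥ y = F.d'}

def toSet : Set (Fin d → ℝ) :=
  F.π '' F.polyhedron

def N : Matrix (Fin d) (Fin F.e) ℝ :=
  LinearMap.toMatrix' F.π.linear

theorem dotProduct_π (g : Fin d → ℝ) (y : Fin F.e → ℝ) :
    g ⬝ᵥ F.π y = g ᵥ* F.N ⬝ᵥ y + g ⬝ᵥ F.π 0 := by
  rw [← dotProduct_mulVec, ← dotProduct_add, N, LinearMap.toMatrix'_mulVec]
  congr 1
  simpa using congrFun F.π.decomp y

def dualResidual : ((Fin d → ℝ) × (Fin F.m' → ℝ)) × (Fin m → ℝ) →ₗ[ℝ] (Fin F.e → ℝ) :=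
  ((-F.N.vecMulLinear).coprod F.C.vecMulLinear).coprod F.A.vecMulLinear

def dualValue : ((Fin d → ℝ) × (Fin F.m' → ℝ)) × (Fin m → ℝ) →ₗ[ℝ] ℝ :=
  (((dotProductBilin ℝ ℝ).flip (F.π 0)).coprod ((dotProductBilin ℝ ℝ).flip F.d')).coprod
    ((dotProductBilin ℝ ℝ).flip F.b)

variable {F}

theorem dualResidual_eq_zero {g : Fin d → ℝ} {μ : Fin F.m' → ℝ} {l : Fin m → ℝ} :
    F.dualResidual ((g, μ), l) = 0 ↔ l ᵥ* F.A + μ ᵥ* F.C = g ᵥ* F.N := by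
  simp only [dualResidual, LinearMap.coprod_apply, LinearMap.neg_apply, vecMulLinear_apply]
  rw [← sub_eq_zero (b := g ᵥ* F.N)]
  constructor <;> intro h <;> rw [← h] <;> abel

@[simp]
theorem dualValue_apply (g : Fin d → ℝ) (μ : Fin F.m' → ℝ) (l : Fin m → ℝ) :
    F.dualValue ((g, μ), l) = g ⬝ᵥ F.π 0 + μ ⬝ᵥ F.d' + l ⬝ᵥ F.b :=
  rfl

theorem dotProduct_le_dualValue {g : Fin d → ℝ} {μ : Fin F.m' → ℝ} {l : Fin m → ℝ} (hl : 0 ≤ l)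
    (h : F.dualResidual ((g, μ), l) = 0) {x : Fin d → ℝ} (hx : x ∈ F.toSet) :
    g ⬝ᵥ x ≤ F.dualValue ((g, μ), l) := by
  obtain ⟨y, ⟨hAy, hCy⟩, rfl⟩ := hx
  rw [dotProduct_π, dualValue_apply]
  linarith [dotProduct_le_of_vecMul_add_vecMul_eq hl (dualResidual_eq_zero.1 h) hAy hCy]

theorem exists_dualValue_le (hne : F.toSet.Nonempty) {g : Fin d → ℝ} {v : ℝ}
    (h : ∀ x ∈ F.toSet, g ⬝ᵥ x ≤ v) :
    ∃ μ l, 0 ≤ l ∧ F.dualResidual ((g, μ), l) = 0 ∧ F.dualValue ((g, μ), l) ≤ v := by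
  obtain ⟨-, y₀, hy₀, -⟩ := hne
  obtain ⟨l, μ, hl, hg, hv⟩ := exists_vecMul_add_vecMul_eq_of_forall_le (v := v - g ⬝ᵥ F.π 0)
    ⟨y₀, hy₀⟩ fun y hAy hCy => by linarith [h _ ⟨y, ⟨hAy, hCy⟩, rfl⟩, F.dotProduct_π g y]
  exact ⟨μ, l, hl, dualResidual_eq_zero.2 hg, by rw [dualValue_apply]; linarith⟩

theorem exists_dualValue_pos (hbdd : ∀ g, ∃ v, ∀ x ∈ F.toSet, g ⬝ᵥ x ≤ v) {x₁ x₂ : Fin d → ℝ}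
    (hx₁ : x₁ ∈ F.toSet) (hx₂ : x₂ ∈ F.toSet) (hne : x₁ ≠ x₂) :
    ∃ μ l, 0 ≤ l ∧ F.dualResidual ((0, μ), l) = 0 ∧ 0 < F.dualValue ((0, μ), l) := by
  set g := x₁ - x₂
  obtain ⟨v₁, hv₁⟩ := hbdd g
  obtain ⟨v₂, hv₂⟩ := hbdd (-g)
  obtain ⟨μ₁, l₁, hl₁, h₁, -⟩ := exists_dualValue_le ⟨x₁, hx₁⟩ hv₁
  obtain ⟨μ₂, l₂, hl₂, h₂, -⟩ := exists_dualValue_le ⟨x₁, hx₁⟩ hv₂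
  have hsum : (((0 : Fin d → ℝ), μ₁ + μ₂), l₁ + l₂) = ((g, μ₁), l₁) + ((-g, μ₂), l₂) := by simp
  refine ⟨μ₁ + μ₂, l₁ + l₂, add_nonneg hl₁ hl₂, by rw [hsum, map_add, h₁, h₂, add_zero], ?_⟩
  have hg : 0 < g ⬝ᵥ g := lt_of_le_of_ne (Finset.sum_nonneg fun i _ => mul_self_nonneg _)
    (Ne.symm (dotProduct_self_eq_zero.not.2 (sub_ne_zero.2 hne)))
  rw [hsum, map_add]
  linarith [dotProduct_le_dualValue hl₁ h₁ hx₁, dotProduct_le_dualValue hl₂ h₂ hx₂,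
    show g ⬝ᵥ g = g ⬝ᵥ x₁ + -g ⬝ᵥ x₂ by rw [neg_dotProduct, dotProduct_sub, sub_eq_add_neg]]

end ExtendedFormulation

open ExtendedFormulation

theorem HasExtFormOfSize.epiSet_suppFn {d m : ℕ} {P : Set (Fin d → ℝ)} (hP : IsPolytope P)
    (hdim : ∃ x ∈ P, ∃ y ∈ P, x ≠ y) (h : HasExtFormOfSize P m) :
    HasExtFormOfSize (epiSet (suppFn P)) m := by
  obtain ⟨e, m', A, b, C, d', π, rfl⟩ := h
  set F : ExtendedFormulation d m := ⟨e, m', A, b, C, d', π⟩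
  change IsPolytope F.toSet at hP
  change HasExtFormOfSize (epiSet (suppFn F.toSet)) m
  obtain ⟨x₁, hx₁, x₂, hx₂, hne⟩ := hdim
  obtain ⟨μ₀, l₀, hl₀, h₀, hq⟩ :=
    exists_dualValue_pos (fun g => ⟨_, fun x hx => hP.le_suppFn g hx⟩) hx₁ hx₂ hne
  suffices epiSet (suppFn F.toSet) = (snocLinearMap ℝ ℝ d ∘ₗ
      ((LinearMap.fst ℝ _ _ ∘ₗ LinearMap.fst ℝ _ _).prod F.dualValue)).toAffineMap ''
      {v | 0 ≤ v.2 ∧ F.dualResidual v = 0} from this ▸ hasExtFormOfSize_image _ _ _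
  ext u
  constructor
  · intro hu
    replace hu : suppFn F.toSet (Fin.init u) ≤ u (Fin.last d) := hu
    obtain ⟨μ₁, l₁, hl₁, h₁, hv₁⟩ := exists_dualValue_le hP.nonempty (hP.suppFn_le_iff.1 hu)
    set s := (u (Fin.last d) - F.dualValue ((Fin.init u, μ₁), l₁)) / F.dualValue ((0, μ₀), l₀)
    have hs : 0 ≤ s := div_nonneg (by linarith) hq.le
    refine ⟨((Fin.init u, μ₁), l₁) + s • ((0, μ₀), l₀), ⟨?_, ?_⟩, ?_⟩
    · exact add_nonneg hl₁ (smul_nonneg hs hl₀)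
    · rw [map_add, map_smul, h₁, h₀, smul_zero, add_zero]
    · have hval : F.dualValue (((Fin.init u, μ₁), l₁) + s • ((0, μ₀), l₀)) = u (Fin.last d) := by
        rw [map_add, map_smul, smul_eq_mul, div_mul_cancel₀ _ hq.ne', add_sub_cancel]
      change Fin.snoc (Fin.init u + s • 0) (F.dualValue _) = u
      rw [hval, smul_zero, add_zero, Fin.snoc_init_self]
  · rintro ⟨⟨⟨c, μ⟩, l⟩, ⟨hl, hres⟩, rfl⟩
    simp only [LinearMap.coe_toAffineMap, LinearMap.comp_apply, LinearMap.prod_apply,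
      snocLinearMap_apply, snoc_mem_epiSet]
    exact hP.suppFn_le_iff.2 fun x hx => dotProduct_le_dualValue hl hres hx

theorem HasExtFormOfSize.of_epiSet_suppFn {d m : ℕ} {P : Set (Fin d → ℝ)} (hP : IsPolytope P)
    (h : HasExtFormOfSize (epiSet (suppFn P)) m) : HasExtFormOfSize P m := by
  obtain ⟨e, m', A, b, C, d', π, hF⟩ := h
  set F : ExtendedFormulation (d + 1) m := ⟨e, m', A, b, C, d', π⟩
  change F.toSet = _ at hF
  have h0 : (0 : Fin (d + 1) → ℝ) ∈ F.toSet := hF ▸ hP.suppFn_zero.le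
  -- The variables are `((u, μ), l)` where `u = (x, -1)` is the objective of a dual certificate.
  set L := F.dualResidual.prod
    (F.dualValue.prod (LinearMap.proj (Fin.last d) ∘ₗ LinearMap.fst ℝ _ _ ∘ₗ LinearMap.fst ℝ _ _))
  suffices P = (LinearMap.funLeft ℝ ℝ Fin.castSucc ∘ₗ LinearMap.fst ℝ _ _ ∘ₗ
      LinearMap.fst ℝ _ _).toAffineMap '' {v | 0 ≤ v.2 ∧ L v = (0, 0, -1)} from
    this ▸ hasExtFormOfSize_image _ _ _
  ext x
  rw [hP.mem_iff_forall_mem_epiSet, ← hF]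
  constructor
  · intro hx
    obtain ⟨μ, l, hl, hres, hval⟩ := exists_dualValue_le ⟨0, h0⟩ hx
    refine ⟨((Fin.snoc x (-1), μ), l), ⟨hl, ?_⟩, ?_⟩
    · have := dotProduct_le_dualValue hl hres h0
      simp only [L, LinearMap.prod_apply, Function.prod, hres, LinearMap.comp_apply,
        LinearMap.fst_apply, LinearMap.proj_apply, Fin.snoc_last]
      rw [dotProduct_zero] at this
      rw [le_antisymm hval this]
    · change Fin.init (Fin.snoc x (-1) : Fin (d + 1) → ℝ) = x
      exact Fin.init_snoc _ _
  · rintro ⟨⟨⟨u, μ⟩, l⟩, ⟨hl, hL⟩, rfl⟩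
    simp only [L, LinearMap.prod_apply, Function.prod, LinearMap.comp_apply, LinearMap.fst_apply,
      LinearMap.proj_apply, Prod.mk.injEq] at hL
    obtain ⟨hres, hval, hlast⟩ := hL
    intro u' hu'
    have hu : Fin.snoc (Fin.init u) (-1) = u := hlast ▸ Fin.snoc_init_self u
    calc _ = u ⬝ᵥ u' := congrArg (· ⬝ᵥ u') hu
      _ ≤ 0 := hval ▸ dotProduct_le_dualValue hl hres hu'

/-- for a polytope `P` of dimension at least one (i.e. containing two distinct
points), `xc P = xc (epi f_P)`. -/
theorem xc_eq_xc_epigraph_support {d : ℕ} (P : Set (Fin d → ℝ)) (hP : IsPolytope P)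
    (hdim : ∃ x ∈ P, ∃ y ∈ P, x ≠ y) :
    xc P = xc (epiSet (suppFn P)) := by
  unfold xc
  congr 1
  ext m
  exact ⟨HasExtFormOfSize.epiSet_suppFn hP hdim, HasExtFormOfSize.of_epiSet_suppFn hP⟩
end

section
/- Let P ⊆ ℝ^d be a nonempty polytope whose support function f_P is computed by a monotone rank-2 maxout network of size s. Then xc(P) ≤ 2s. In other words, xc(P) ≤ 2·mnnc(P), where mnnc(P) is the minimum size of a monotone rank-2 maxout network computing f_P. -/
/-! Call `Y ≥ 0` on the pieces `(j, i)` of the neurons a unit flow if the total flow through the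
pieces of each neuron `j` is what it receives from the later neurons, `Σ Y (j', i) w j' i j`, plus
one unit at the output neuron. Every unit flow satisfies the telescoping identity
`Σ Y (j, i) (z_j - Σ_l w j i l z_l) = z_out`. Since `z_j ≥ ⟨a j i, c⟩ + Σ_l w j i l z_l`, this gives
`⟨c, Σ Y (j, i) a j i⟩ ≤ f_P c`, with equality for the flow routed through the active pieces,
which is nonnegative because `w ≥ 0`. So the linear image of the (compact) polyhedron of unit flows
has the support function of `P`, hence equals `P`, and that polyhedron is cut out by the `k s`
inequalities `Y ≥ 0` and `s` equations. -/

open Finset Pointwise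

lemma mem_of_forall_exists_dotProduct_le {ι : Type*} [Fintype ι] {K : Set (ι → ℝ)}
    (hK : Convex ℝ K) (hKc : IsClosed K) {x : ι → ℝ}
    (h : ∀ c : ι → ℝ, ∃ u ∈ K, c ⬝ᵥ x ≤ c ⬝ᵥ u) : x ∈ K := by
  classical
  by_contra hx
  obtain ⟨f, r, hfK, hrx⟩ := geometric_hahn_banach_closed_point hK hKc hx
  set c : ι → ℝ := fun i => f fun j => if i = j then 1 else 0
  have hf : ∀ y, f y = c ⬝ᵥ y := fun y => by
    change (f : (ι → ℝ) →ₗ[ℝ] ℝ) y = _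
    rw [LinearMap.pi_apply_eq_sum_univ (f : (ι → ℝ) →ₗ[ℝ] ℝ) y]
    simp [c, dotProduct, mul_comm]
  obtain ⟨u, huK, hu⟩ := h c
  have hfu := hfK u huK
  rw [hf] at hfu hrx
  linarith

lemma dotProduct_le_suppFn {d : ℕ} {P : Set (Fin d → ℝ)} (hP : IsCompact P) (c : Fin d → ℝ)
    {x : Fin d → ℝ} (hx : x ∈ P) : c ⬝ᵥ x ≤ suppFn P c :=
  le_csSup (hP.image (continuous_const.dotProduct continuous_id)).bddAbove ⟨x, hx, rfl⟩

lemma exists_suppFn_eq_dotProduct {d : ℕ} {P : Set (Fin d → ℝ)} (hP : IsCompact P)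
    (hne : P.Nonempty) (c : Fin d → ℝ) : ∃ u ∈ P, suppFn P c = c ⬝ᵥ u := by
  obtain ⟨u, hu, he⟩ :=
    (hP.image (continuous_const.dotProduct continuous_id)).sSup_mem (hne.image (c ⬝ᵥ ·))
  exact ⟨u, hu, he.symm⟩

namespace IsPolytope

variable {d : ℕ} {P : Set (Fin d → ℝ)}

lemma isCompact_s7 (hP : IsPolytope P) : IsCompact P := by
  obtain ⟨V, -, rfl⟩ := hP
  exact V.finite_toSet.isCompact_convexHull ℝ

lemma convex_s7 (hP : IsPolytope P) : Convex ℝ P := by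
  obtain ⟨V, -, rfl⟩ := hP
  exact convex_convexHull ℝ _

lemma nonempty_s7 (hP : IsPolytope P) : P.Nonempty := by
  obtain ⟨V, hV, rfl⟩ := hP
  exact (Finset.coe_nonempty.mpr hV).convexHull

lemma mem_of_forall_dotProduct_le_suppFn (hP : IsPolytope P) {x : Fin d → ℝ}
    (hx : ∀ c, c ⬝ᵥ x ≤ suppFn P c) : x ∈ P :=
  mem_of_forall_exists_dotProduct_le hP.convex_s7 hP.isCompact_s7.isClosed fun c =>
    let ⟨u, hu, he⟩ := exists_suppFn_eq_dotProduct hP.isCompact_s7 hP.nonempty_s7 c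
    ⟨u, hu, he ▸ hx c⟩

end IsPolytope

lemma hasExtFormOfSize_image_nonneg_inter {d m : ℕ} {ι : Type*} [Fintype ι]
    (L : (ι → ℝ) →ₗ[ℝ] (Fin m → ℝ)) (b : Fin m → ℝ) (ρ : (ι → ℝ) →ₗ[ℝ] (Fin d → ℝ)) :
    HasExtFormOfSize (ρ '' {Y | 0 ≤ Y ∧ L Y = b}) (Fintype.card ι) := by
  classical
  let e : (Fin (Fintype.card ι) → ℝ) ≃ₗ[ℝ] (ι → ℝ) :=
    LinearEquiv.funCongrLeft ℝ ℝ (Fintype.equivFin ι)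
  refine ⟨_, m, -1, 0, LinearMap.toMatrix' (L ∘ₗ e.toLinearMap), b,
    (ρ ∘ₗ e.toLinearMap).toAffineMap, ?_⟩
  have hpre : {y | (-1 : Matrix (Fin (Fintype.card ι)) (Fin (Fintype.card ι)) ℝ).mulVec y ≤ 0 ∧
        (LinearMap.toMatrix' (L ∘ₗ e.toLinearMap)).mulVec y = b}
      = e ⁻¹' {Y | 0 ≤ Y ∧ L Y = b} := by
    ext y
    simp only [Matrix.neg_mulVec, Matrix.one_mulVec, neg_nonpos, LinearMap.toMatrix'_mulVec,
      Set.mem_ofPred_eq, Set.mem_preimage, LinearMap.comp_apply, LinearEquiv.coe_coe]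
    refine and_congr_left' ⟨fun hy i => ?_, fun hy i => ?_⟩
    · exact hy _
    · simpa [e, LinearMap.funLeft_apply] using hy ((Fintype.equivFin ι).symm i)
  rw [hpre, LinearMap.coe_toAffineMap, LinearMap.coe_comp, Set.image_comp, LinearEquiv.coe_coe,
    Set.image_preimage_eq _ e.surjective]

lemma xc_image_nonneg_inter_le {d m : ℕ} {ι : Type*} [Fintype ι]
    (L : (ι → ℝ) →ₗ[ℝ] (Fin m → ℝ)) (b : Fin m → ℝ) (ρ : (ι → ℝ) →ₗ[ℝ] (Fin d → ℝ)) :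
    xc (ρ '' {Y | 0 ≤ Y ∧ L Y = b}) ≤ Fintype.card ι :=
  Nat.sInf_le (hasExtFormOfSize_image_nonneg_inter L b ρ)

section Flows

variable {d k s : ℕ}

def outputIndicator (s : ℕ) : Fin s → ℝ := fun j => if (j : ℕ) = s - 1 then 1 else 0

def flowExcess (w : Fin s → Fin k → Fin s → ℝ) : (Fin s × Fin k → ℝ) →ₗ[ℝ] (Fin s → ℝ) where
  toFun Y j := ∑ i, Y (j, i) - ∑ j' ∈ univ.filter (j < ·), ∑ i, Y (j', i) * w j' i j
  map_add' Y Y' := by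
    ext j
    simp only [Pi.add_apply, add_mul, sum_add_distrib]
    ring
  map_smul' r Y := by
    ext j
    simp only [Pi.smul_apply, smul_eq_mul, RingHom.id_apply, mul_assoc, ← mul_sum]
    ring

def unitFlows (w : Fin s → Fin k → Fin s → ℝ) : Set (Fin s × Fin k → ℝ) :=
  {Y | 0 ≤ Y ∧ flowExcess w Y = outputIndicator s}

noncomputable def flowOutput (a : Fin s → Fin k → Fin d → ℝ) :
    (Fin s × Fin k → ℝ) →ₗ[ℝ] (Fin d → ℝ) :=
  Fintype.linearCombination ℝ fun p => a p.1 p.2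

lemma flowExcess_dotProduct (w : Fin s → Fin k → Fin s → ℝ) (Y : Fin s × Fin k → ℝ)
    (φ : Fin s → ℝ) :
    flowExcess w Y ⬝ᵥ φ =
      ∑ p, Y p * (φ p.1 - ∑ l ∈ univ.filter (· < p.1), w p.1 p.2 l * φ l) := by
  simp only [flowExcess, LinearMap.coe_mk, AddHom.coe_mk, dotProduct, sub_mul, mul_sub,
    sum_sub_distrib, Fintype.sum_prod_type, sum_mul, mul_sum]
  congr 1
  rw [Finset.sum_comm' (t' := univ) (s' := fun j' => univ.filter (· < j'))
    (fun j j' => by simp)]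
  refine sum_congr rfl fun j' _ => ?_
  rw [sum_comm]
  exact sum_congr rfl fun l _ => sum_congr rfl fun i _ => by ring

lemma outputIndicator_dotProduct (hs : 0 < s) (φ : Fin s → ℝ) :
    outputIndicator s ⬝ᵥ φ = φ ⟨s - 1, Nat.sub_lt hs Nat.one_pos⟩ := by
  rw [dotProduct, Fintype.sum_eq_single ⟨s - 1, Nat.sub_lt hs Nat.one_pos⟩]
  · simp [outputIndicator]
  · intro j hj
    simp [outputIndicator, Fin.ext_iff.not.mp hj]

lemma dotProduct_flowOutput (a : Fin s → Fin k → Fin d → ℝ) (c : Fin d → ℝ)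
    (Y : Fin s × Fin k → ℝ) : c ⬝ᵥ flowOutput a Y = ∑ p, Y p * (a p.1 p.2 ⬝ᵥ c) := by
  rw [flowOutput, Fintype.linearCombination_apply, dotProduct_sum]
  exact sum_congr rfl fun p _ => by rw [dotProduct_smul, smul_eq_mul, dotProduct_comm]

def backFlow (g : Fin s → Fin s → ℝ) (j : Fin s) : ℝ :=
  outputIndicator s j + ∑ j' ∈ (univ.filter (j < ·)).attach, backFlow g j' * g j' j
termination_by s - j
decreasing_by
  have := (mem_filter.mp j'.2).2
  omega

lemma backFlow_eq (g : Fin s → Fin s → ℝ) (j : Fin s) :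
    backFlow g j = outputIndicator s j + ∑ j' ∈ univ.filter (j < ·), backFlow g j' * g j' j := by
  rw [backFlow, sum_attach _ fun j' => backFlow g j' * g j' j]

lemma backFlow_nonneg {g : Fin s → Fin s → ℝ} (hg : ∀ j' j, 0 ≤ g j' j) (j : Fin s) :
    0 ≤ backFlow g j := by
  induction j using backFlow.induct with
  | _ j ih =>
    rw [backFlow_eq]
    exact add_nonneg (by unfold outputIndicator; positivity)
      (sum_nonneg fun j' hj' => mul_nonneg (ih ⟨j', hj'⟩) (hg j' j))

lemma convex_unitFlows (w : Fin s → Fin k → Fin s → ℝ) : Convex ℝ (unitFlows w) :=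
  (convex_Ici 0).inter ((convex_singleton _).linear_preimage (flowExcess w))

lemma isClosed_unitFlows (w : Fin s → Fin k → Fin s → ℝ) : IsClosed (unitFlows w) :=
  (isClosed_le continuous_const continuous_id).inter
    (isClosed_eq (flowExcess w).continuous_of_finiteDimensional continuous_const)

lemma unitFlows_subset_Icc {w : Fin s → Fin k → Fin s → ℝ} (hw : ∀ j i l, 0 ≤ w j i l) :
    unitFlows w ⊆ Set.Icc 0 fun _ => (1 + ∑ q : Fin s × Fin k, ∑ l, w q.1 q.2 l) ^ s := by
  rintro Y ⟨hY0, hYe⟩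
  refine ⟨hY0, fun p => ?_⟩
  set W := ∑ q : Fin s × Fin k, ∑ l, w q.1 q.2 l
  have hW : 0 ≤ W := sum_nonneg fun q _ => sum_nonneg fun l _ => hw q.1 q.2 l
  set φ : Fin s → ℝ := fun j => (1 + W) ^ ((j : ℕ) + 1)
  -- the potential `φ` makes every coefficient of the weak duality identity at least `1`
  have hcoef : ∀ q : Fin s × Fin k,
      1 ≤ φ q.1 - ∑ l ∈ univ.filter (· < q.1), w q.1 q.2 l * φ l := by
    rintro ⟨j, i⟩
    have hin : ∑ l ∈ univ.filter (· < j), w j i l * φ l ≤ W * (1 + W) ^ (j : ℕ) :=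
      calc ∑ l ∈ univ.filter (· < j), w j i l * φ l
          ≤ ∑ l ∈ univ.filter (· < j), w j i l * (1 + W) ^ (j : ℕ) :=
            sum_le_sum fun l hl => mul_le_mul_of_nonneg_left
              (pow_le_pow_right₀ (by linarith) (mem_filter.mp hl).2) (hw j i l)
        _ ≤ ∑ l, w j i l * (1 + W) ^ (j : ℕ) :=
            sum_le_sum_of_subset_of_nonneg (filter_subset _ _) fun l _ _ =>
              mul_nonneg (hw j i l) (by positivity)
        _ = (∑ l, w j i l) * (1 + W) ^ (j : ℕ) := (sum_mul _ _ _).symm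
        _ ≤ W * (1 + W) ^ (j : ℕ) :=
            mul_le_mul_of_nonneg_right (single_le_sum (f := fun q => ∑ l, w q.1 q.2 l)
              (fun q _ => sum_nonneg fun l _ => hw q.1 q.2 l) (mem_univ (j, i))) (by positivity)
    have hpow : 1 ≤ (1 + W) ^ (j : ℕ) := one_le_pow₀ (by linarith)
    simp only [φ, pow_succ] at hin ⊢
    nlinarith
  have htotal : ∑ q, Y q * (φ q.1 - ∑ l ∈ univ.filter (· < q.1), w q.1 q.2 l * φ l)
      = (1 + W) ^ s := by
    rw [← flowExcess_dotProduct, hYe, outputIndicator_dotProduct p.1.pos]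
    simp only [φ, Nat.sub_add_cancel p.1.pos]
  calc Y p ≤ Y p * (φ p.1 - ∑ l ∈ univ.filter (· < p.1), w p.1 p.2 l * φ l) :=
        le_mul_of_one_le_right (hY0 p) (hcoef p)
    _ ≤ (1 + W) ^ s := htotal ▸ single_le_sum
        (fun q _ => mul_nonneg (hY0 q) (zero_le_one.trans (hcoef q))) (mem_univ p)

lemma isCompact_unitFlows {w : Fin s → Fin k → Fin s → ℝ} (hw : ∀ j i l, 0 ≤ w j i l) :
    IsCompact (unitFlows w) :=
  isCompact_Icc.of_isClosed_subset (isClosed_unitFlows w) (unitFlows_subset_Icc hw)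

end Flows

namespace MaxoutComputes

variable {d k s : ℕ} {a : Fin s → Fin k → Fin d → ℝ} {w : Fin s → Fin k → Fin s → ℝ}
  {f : (Fin d → ℝ) → ℝ}

lemma dotProduct_flowOutput_le (h : MaxoutComputes k s a w f) {Y : Fin s × Fin k → ℝ}
    (hY : Y ∈ unitFlows w) (c : Fin d → ℝ) : c ⬝ᵥ flowOutput a Y ≤ f c := by
  obtain ⟨z, hs, hz, rfl⟩ := h
  calc c ⬝ᵥ flowOutput a Y = ∑ p, Y p * (a p.1 p.2 ⬝ᵥ c) := dotProduct_flowOutput a c Y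
    _ ≤ ∑ p, Y p * (z p.1 c - ∑ l ∈ univ.filter (· < p.1), w p.1 p.2 l * z l c) :=
        sum_le_sum fun p _ => mul_le_mul_of_nonneg_left
          (le_sub_iff_add_le.mpr ((hz p.1 c).2 ⟨p.2, rfl⟩)) (hY.1 p)
    _ = z ⟨s - 1, _⟩ c := by
        rw [← flowExcess_dotProduct w Y fun l => z l c, hY.2, outputIndicator_dotProduct hs]

lemma exists_mem_unitFlows_dotProduct_eq (h : MaxoutComputes k s a w f)
    (hw : ∀ j i l, 0 ≤ w j i l) (c : Fin d → ℝ) :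
    ∃ Y ∈ unitFlows w, c ⬝ᵥ flowOutput a Y = f c := by
  obtain ⟨z, hs, hz, rfl⟩ := h
  choose I hI using fun j => (hz j c).1
  set μ := backFlow fun j' j => w j' (I j') j
  -- route the unit of flow backwards through the active piece `I j` of every neuron
  let Y : Fin s × Fin k → ℝ := fun p => if p.2 = I p.1 then μ p.1 else 0
  have hY : Y ∈ unitFlows w := by
    refine ⟨fun p => ?_, ?_⟩
    · by_cases hp : p.2 = I p.1
      · simpa [Y, hp] using backFlow_nonneg (fun j' j => hw j' (I j') j) p.1
      · simp [Y, hp]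
    · ext j
      simp only [flowExcess, LinearMap.coe_mk, AddHom.coe_mk, Y, ite_mul, zero_mul, sum_ite_eq',
        mem_univ, if_true]
      linarith [backFlow_eq (fun j' j => w j' (I j') j) j]
  refine ⟨Y, hY, ?_⟩
  rw [dotProduct_flowOutput, ← outputIndicator_dotProduct hs fun l => z l c, ← hY.2,
    flowExcess_dotProduct]
  refine sum_congr rfl fun p _ => ?_
  by_cases hp : p.2 = I p.1
  · obtain ⟨j, i⟩ := p
    obtain rfl : i = I j := hp
    simp only [Y, if_pos rfl]
    exact congrArg (μ j * ·) (eq_sub_iff_add_eq.mpr (hI j))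
  · simp [Y, hp]

lemma image_flowOutput_unitFlows {P : Set (Fin d → ℝ)} (hP : IsPolytope P)
    (h : MaxoutComputes k s a w (suppFn P)) (hw : ∀ j i l, 0 ≤ w j i l) :
    flowOutput a '' unitFlows w = P := by
  refine subset_antisymm ?_ fun x hx => ?_
  · rintro _ ⟨Y, hY, rfl⟩
    exact hP.mem_of_forall_dotProduct_le_suppFn (h.dotProduct_flowOutput_le hY)
  · have hcompact := (isCompact_unitFlows hw).image (flowOutput a).continuous_of_finiteDimensional
    refine mem_of_forall_exists_dotProduct_le ((convex_unitFlows w).linear_image _)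
      hcompact.isClosed fun c => ?_
    obtain ⟨Y, hY, hYc⟩ := h.exists_mem_unitFlows_dotProduct_eq hw c
    exact ⟨_, ⟨Y, hY, rfl⟩, hYc ▸ dotProduct_le_suppFn hP.isCompact_s7 c hx⟩

end MaxoutComputes

theorem xc_le_mul_of_isMonotoneMaxoutNetwork {d k s : ℕ} {P : Set (Fin d → ℝ)}
    (hP : IsPolytope P) (hf : IsMonotoneMaxoutNetwork k s (suppFn P)) : xc P ≤ s * k := by
  obtain ⟨a, w, -, hw, h⟩ := hf
  rw [← h.image_flowOutput_unitFlows hP hw]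
  exact (xc_image_nonneg_inter_le (flowExcess w) (outputIndicator s) (flowOutput a)).trans_eq
    (by simp)

/-- if the support function of a nonempty polytope `P` is computed by a
monotone rank-2 maxout network of size `s`, then `xc P ≤ 2 s`, i.e. `xc P ≤ 2 · mnnc P`. -/
theorem xc_le_two_mnnc {d s : ℕ} (P : Set (Fin d → ℝ)) (hP : IsPolytope P)
    (hf : IsMonotoneMaxoutNetwork 2 s (suppFn P)) :
    xc P ≤ 2 * s :=
  (xc_le_mul_of_isMonotoneMaxoutNetwork hP hf).trans_eq (mul_comm s 2)
end

section
/- Let P, Q, R ⊆ ℝ^d be nonempty polytopes with P + Q = R, let c ∈ ℝ^d, and let c_1 = c, c_2, …, c_d be a basis of ℝ^d. Let x^Q and x^R be the (unique) lexicographically optimal points of Q and R with respect to (c_1ᵀx, …, c_dᵀx), i.e., the unique elements of the iterated face sets F^Q_d and F^R_d where F_0 = Q (resp. R) and F_i = argmax_{x ∈ F_{i-1}} c_iᵀx. Then x^R − x^Q ∈ P and cᵀ(x^R − x^Q) = max_{x ∈ P} cᵀx; that is, x^R − x^Q is an optimal solution of max_{x ∈ P} cᵀx. -/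
open Finset Pointwise

lemma lin_sum {d : ℕ} (c : Fin d → ℝ) (x y : Fin d → ℝ) :
    ∑ m, c m * (x + y) m = ∑ m, c m * x m + ∑ m, c m * y m := by
  simp [Pi.add_apply, mul_add, Finset.sum_add_distrib]

lemma argmaxSet_add {d : ℕ} (c : Fin d → ℝ) (A B : Set (Fin d → ℝ)) :
    argmaxSet c (A + B) = argmaxSet c A + argmaxSet c B := by
  ext x
  constructor
  · rintro ⟨hx, hmax⟩
    obtain ⟨a, ha, b, hb, rfl⟩ := hx
    have hamax : ∀ a' ∈ A, ∑ m, c m * a' m ≤ ∑ m, c m * a m := by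
      intro a' ha'
      have := hmax (a' + b) ⟨a', ha', b, hb, rfl⟩
      rw [lin_sum, lin_sum] at this
      linarith
    have hbmax : ∀ b' ∈ B, ∑ m, c m * b' m ≤ ∑ m, c m * b m := by
      intro b' hb'
      have := hmax (a + b') ⟨a, ha, b', hb', rfl⟩
      rw [lin_sum, lin_sum] at this
      linarith
    exact ⟨a, ⟨ha, hamax⟩, b, ⟨hb, hbmax⟩, rfl⟩
  · rintro ⟨a, ⟨ha, hamax⟩, b, ⟨hb, hbmax⟩, rfl⟩
    refine ⟨⟨a, ha, b, hb, rfl⟩, ?_⟩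
    rintro y ⟨a', ha', b', hb', rfl⟩
    rw [lin_sum, lin_sum]
    exact add_le_add (hamax a' ha') (hbmax b' hb')

lemma iterFaces_add {d : ℕ} (cs : Fin d → Fin d → ℝ) (A B : Set (Fin d → ℝ)) :
    ∀ n, iterFaces cs (A + B) n = iterFaces cs A n + iterFaces cs B n := by
  intro n
  induction n with
  | zero => rfl
  | succ i ih =>
    by_cases h : i < d
    · simp only [iterFaces, dif_pos h, ih, argmaxSet_add]
    · simp only [iterFaces, dif_neg h, ih]

lemma iterFaces_antitone {d : ℕ} (cs : Fin d → Fin d → ℝ) (S : Set (Fin d → ℝ)) :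
    ∀ m n, m ≤ n → iterFaces cs S n ⊆ iterFaces cs S m := by
  intro m n hmn
  induction n with
  | zero => simpa [Nat.le_zero.mp hmn] using subset_rfl
  | succ i ih =>
    rcases Nat.lt_or_ge m (i + 1) with h | h
    · have hsub : iterFaces cs S (i + 1) ⊆ iterFaces cs S i := by
        by_cases hi : i < d
        · simp only [iterFaces, dif_pos hi]
          exact fun x hx => hx.1
        · simp only [iterFaces, dif_neg hi]
          exact subset_rfl
      exact fun x hx => ih (Nat.lt_succ_iff.mp h) (hsub hx)
    · have : m = i + 1 := le_antisymm hmn h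
      subst this; exact subset_rfl

/-- correctness of the algorithm optimizing over `P` given `P + Q = R`:
if `xQ` and `xR` are the unique lexicographic optima of `Q` and `R` with respect to a basis
`c_1 = c, c_2, …, c_d`, then `xR − xQ` is an optimal solution of `max_{x ∈ P} cᵀx`. -/
theorem lex_algorithm_correct {d : ℕ} (hd : 0 < d) (P Q R : Set (Fin d → ℝ))
    (hP : IsPolytope P) (hQ : IsPolytope Q) (hR : IsPolytope R) (hPQR : P + Q = R)
    (c : Fin d → ℝ) (cs : Fin d → Fin d → ℝ)
    (hcs : LinearIndependent ℝ cs ∧ Submodule.span ℝ (Set.range cs) = ⊤)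
    (hc1 : cs ⟨0, hd⟩ = c)
    (xQ xR : Fin d → ℝ)
    (hxQ : iterFaces cs Q d = {xQ}) (hxR : iterFaces cs R d = {xR}) :
    xR - xQ ∈ P ∧ ∀ x ∈ P, ∑ m, c m * x m ≤ ∑ m, c m * (xR - xQ) m := by
  have h1 : xR ∈ iterFaces cs R d := by rw [hxR]; rfl
  rw [← hPQR, iterFaces_add, hxQ] at h1
  obtain ⟨p, hp, q, hq, hpq⟩ := h1
  rw [Set.mem_singleton_iff] at hq
  have hpeq : xR - xQ = p := by rw [← hpq, hq]; exact add_sub_cancel_right p xQ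
  rw [hpeq]
  have hsub : iterFaces cs P d ⊆ iterFaces cs P 1 := iterFaces_antitone cs P 1 d hd
  have h2 : p ∈ iterFaces cs P 1 := hsub hp
  have h3 : iterFaces cs P 1 = argmaxSet (cs ⟨0, hd⟩) P := by
    simp only [iterFaces, dif_pos hd]
  rw [h3, hc1] at h2
  exact ⟨h2.1, h2.2⟩
end

section
/- Extension complexity is subadditive under Minkowski sum: for nonempty polytopes P, Q ⊆ ℝ^d, one has xc(P + Q) ≤ xc(P) + xc(Q). -/
open Finset Pointwise

section XcAux

open Finset

lemma forall_fin_add' {m n : ℕ} (p : Fin (m + n) → Prop) :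
    (∀ i, p i) ↔ (∀ i : Fin m, p (Fin.castAdd n i)) ∧ (∀ i : Fin n, p (Fin.natAdd m i)) :=
  ⟨fun h => ⟨fun i => h _, fun i => h _⟩, fun h i => Fin.addCases h.1 h.2 i⟩

lemma hasExtForm_add {d : ℕ} {P Q : Set (Fin d → ℝ)} {m₁ m₂ : ℕ}
    (hP : HasExtFormOfSize P m₁) (hQ : HasExtFormOfSize Q m₂) :
    HasExtFormOfSize (P + Q) (m₁ + m₂) := by
  obtain ⟨e₁, m₁', A₁, b₁, C₁, d₁, π₁, hπ₁⟩ := hP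
  obtain ⟨e₂, m₂', A₂, b₂, C₂, d₂, π₂, hπ₂⟩ := hQ
  refine ⟨e₁ + e₂, m₁' + m₂',
    fun i => Fin.addCases (fun i₁ => Fin.append (A₁ i₁) 0) (fun i₂ => Fin.append 0 (A₂ i₂)) i,
    Fin.append b₁ b₂,
    fun i => Fin.addCases (fun i₁ => Fin.append (C₁ i₁) 0) (fun i₂ => Fin.append 0 (C₂ i₂)) i,
    Fin.append d₁ d₂,
    π₁.comp (LinearMap.funLeft ℝ ℝ (Fin.castAdd e₂)).toAffineMap +
      π₂.comp (LinearMap.funLeft ℝ ℝ (Fin.natAdd e₁)).toAffineMap, ?_⟩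
  have hset : {y : Fin (e₁ + e₂) → ℝ |
        Matrix.mulVec (fun i => Fin.addCases (fun i₁ => Fin.append (A₁ i₁) 0)
          (fun i₂ => Fin.append 0 (A₂ i₂)) i) y ≤ Fin.append b₁ b₂ ∧
        Matrix.mulVec (fun i => Fin.addCases (fun i₁ => Fin.append (C₁ i₁) 0)
          (fun i₂ => Fin.append 0 (C₂ i₂)) i) y = Fin.append d₁ d₂}
      = {y | (A₁.mulVec (fun j => y (Fin.castAdd e₂ j)) ≤ b₁ ∧
              C₁.mulVec (fun j => y (Fin.castAdd e₂ j)) = d₁) ∧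
             (A₂.mulVec (fun j => y (Fin.natAdd e₁ j)) ≤ b₂ ∧
              C₂.mulVec (fun j => y (Fin.natAdd e₁ j)) = d₂)} := by
    ext y
    simp only [Set.mem_setOf_eq, Pi.le_def, funext_iff, forall_fin_add', Matrix.mulVec,
      dotProduct, Fin.addCases_left, Fin.addCases_right, Fin.sum_univ_add,
      Fin.append_left, Fin.append_right, Pi.zero_apply, zero_mul, Finset.sum_const_zero,
      add_zero, zero_add]
    tauto
  rw [hset, ← hπ₁, ← hπ₂]
  ext p
  constructor
  · rintro ⟨y, ⟨hy₁, hy₂⟩, rfl⟩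
    exact ⟨π₁ (fun j => y (Fin.castAdd e₂ j)), ⟨_, hy₁, rfl⟩,
      π₂ (fun j => y (Fin.natAdd e₁ j)), ⟨_, hy₂, rfl⟩, by
        simp only [AffineMap.coe_add, AffineMap.coe_comp, Pi.add_apply, Function.comp_apply]; rfl⟩
  · rintro ⟨p₁, ⟨y₁, hy₁, rfl⟩, p₂, ⟨y₂, hy₂, rfl⟩, rfl⟩
    refine ⟨Fin.append y₁ y₂, ⟨?_, ?_⟩, ?_⟩
    · simpa [Fin.append_left] using hy₁
    · simpa [Fin.append_right] using hy₂
    · have e1 : (fun j => Fin.append y₁ y₂ (Fin.castAdd e₂ j)) = y₁ :=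
        funext fun j => Fin.append_left _ _ j
      have e2 : (fun j => Fin.append y₁ y₂ (Fin.natAdd e₁ j)) = y₂ :=
        funext fun j => Fin.append_right _ _ j
      simp only [AffineMap.coe_add, AffineMap.coe_comp, Pi.add_apply, Function.comp_apply]
      show π₁ (fun j => Fin.append y₁ y₂ (Fin.castAdd e₂ j)) +
        π₂ (fun j => Fin.append y₁ y₂ (Fin.natAdd e₁ j)) = _
      rw [e1, e2]

lemma isPolytope_hasExtForm {d : ℕ} {P : Set (Fin d → ℝ)} (hP : IsPolytope P) :
    ∃ m, HasExtFormOfSize P m := by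
  obtain ⟨V, -, rfl⟩ := hP
  set n := V.card with hn
  let v : Fin n → (Fin d → ℝ) := fun i => (V.equivFin.symm i : Fin d → ℝ)
  have hv : Set.range v = (V : Set (Fin d → ℝ)) := by
    ext x
    simp only [Set.mem_range, Finset.mem_coe]
    constructor
    · rintro ⟨i, rfl⟩; exact (V.equivFin.symm i).2
    · intro hx; exact ⟨V.equivFin ⟨x, hx⟩, by simp [v]⟩
  let L : (Fin n → ℝ) →ₗ[ℝ] (Fin d → ℝ) :=
    { toFun := fun y => ∑ i, y i • v i
      map_add' := by intro a b; simp [add_smul, Finset.sum_add_distrib]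
      map_smul' := by intro c a; simp [smul_smul, Finset.smul_sum] }
  refine ⟨n, n, 1, -(1 : Matrix (Fin n) (Fin n) ℝ), 0, fun _ _ => 1, fun _ => 1,
    L.toAffineMap, ?_⟩
  have hfeas : {y : Fin n → ℝ | (-(1 : Matrix (Fin n) (Fin n) ℝ)).mulVec y ≤ 0 ∧
      Matrix.mulVec (fun _ _ => (1 : ℝ) : Matrix (Fin 1) (Fin n) ℝ) y = fun _ => 1}
      = stdSimplex ℝ (Fin n) := by
    ext y
    simp only [Set.mem_setOf_eq, Matrix.neg_mulVec, Matrix.one_mulVec, Pi.le_def,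
      stdSimplex, funext_iff, Matrix.mulVec, dotProduct, one_mul,
      Pi.neg_apply, Pi.zero_apply, neg_nonpos, Fin.forall_fin_one]
  have hL : ∀ i : Fin n, L (fun j => if i = j then (1 : ℝ) else 0) = v i := by
    intro i
    show (∑ j, (if i = j then (1:ℝ) else 0) • v j) = v i
    simp [ite_smul]
  rw [LinearMap.coe_toAffineMap, hfeas]
  calc L '' stdSimplex ℝ (Fin n)
      = L '' convexHull ℝ (Set.range fun i j : Fin n => if i = j then (1:ℝ) else 0) := by
        rw [← convexHull_basis_eq_stdSimplex]
    _ = convexHull ℝ (L '' Set.range fun i j : Fin n => if i = j then (1:ℝ) else 0) :=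
        (L.image_convexHull _)
    _ = convexHull ℝ (V : Set (Fin d → ℝ)) := by
        rw [← Set.range_comp]
        have hcomp : (⇑L ∘ fun i j : Fin n => if i = j then (1:ℝ) else 0) = v :=
          funext fun i => hL i
        rw [hcomp, hv]

end XcAux

/-- extension complexity is subadditive under Minkowski sum:
`xc (P + Q) ≤ xc P + xc Q` for nonempty polytopes `P, Q`. -/
theorem xc_minkowski_subadditive {d : ℕ} (P Q : Set (Fin d → ℝ))
    (hP : IsPolytope P) (hQ : IsPolytope Q) :
    xc (P + Q) ≤ xc P + xc Q := by
  obtain ⟨mP, hmP⟩ := isPolytope_hasExtForm hP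
  obtain ⟨mQ, hmQ⟩ := isPolytope_hasExtForm hQ
  have hxP : HasExtFormOfSize P (xc P) := by
    have h := Nat.sInf_mem (s := {m | HasExtFormOfSize P m}) ⟨mP, hmP⟩
    exact h
  have hxQ : HasExtFormOfSize Q (xc Q) := by
    have h := Nat.sInf_mem (s := {m | HasExtFormOfSize Q m}) ⟨mQ, hmQ⟩
    exact h
  exact Nat.sInf_le (s := {m | HasExtFormOfSize (P + Q) m}) (hasExtForm_add hxP hxQ)
end

section
/- Let P ⊆ ℝ^n be a nonempty polytope contained in the nonnegative orthant, and define its monotone closure Q = {x ∈ ℝ^n : ∃ y ∈ P with 0 ≤ x ≤ y componentwise}. Then Q is a polytope and xc(Q) ≤ xc(P) + 2n. -/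
open Finset Pointwise

noncomputable def hadMap {n : ℕ} (y : Fin n → ℝ) : (Fin n → ℝ) →ₗ[ℝ] (Fin n → ℝ) where
  toFun c := fun i => c i * y i
  map_add' a b := by funext i; simp [add_mul]
  map_smul' r a := by funext i; simp [mul_assoc]

noncomputable def cubeV (n : ℕ) : Finset (Fin n → ℝ) := Fintype.piFinset fun _ => ({0,1} : Finset ℝ)

lemma mem_hull_cube {n : ℕ} {t : Fin n → ℝ} (h0 : ∀ i, 0 ≤ t i) (h1 : ∀ i, t i ≤ 1) :
    t ∈ convexHull ℝ (cubeV n : Set (Fin n → ℝ)) := by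
  have : (cubeV n : Set (Fin n → ℝ)) = Set.pi Set.univ (fun _ => ({0,1} : Set ℝ)) := by
    rw [cubeV, Fintype.coe_piFinset]; simp
  rw [this, convexHull_pi]
  intro i _
  rw [convexHull_pair, segment_eq_Icc (zero_le_one)]
  exact ⟨h0 i, h1 i⟩

lemma polytope_part {n : ℕ} (P : Set (Fin n → ℝ)) (V : Finset (Fin n → ℝ)) (_hV : V.Nonempty)
    (hPV : P = convexHull ℝ (V : Set (Fin n → ℝ)))
    (hPpos : ∀ x ∈ P, ∀ i, 0 ≤ x i) :
    {x : Fin n → ℝ | ∃ y ∈ P, (∀ i, 0 ≤ x i) ∧ ∀ i, x i ≤ y i} =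
      convexHull ℝ (((V ×ˢ cubeV n).image fun p => fun i => p.2 i * p.1 i : Finset (Fin n → ℝ)) :
        Set (Fin n → ℝ)) := by
  set W : Finset (Fin n → ℝ) := (V ×ˢ cubeV n).image fun p => fun i => p.2 i * p.1 i with hW
  have hcube : ∀ ε ∈ cubeV n, ∀ i, ε i = 0 ∨ ε i = 1 := by
    intro ε hε i
    have := (Fintype.mem_piFinset.1 hε) i
    simpa using this
  apply Set.Subset.antisymm
  · -- Q ⊆ conv W
    rintro x ⟨y, hyP, hx0, hxy⟩
    -- define t
    set t : Fin n → ℝ := fun i => if y i = 0 then 0 else x i / y i with ht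
    have hy0 : ∀ i, 0 ≤ y i := hPpos y hyP
    have htmul : ∀ i, t i * y i = x i := by
      intro i
      by_cases h : y i = 0
      · simp [ht, h]
        exact (le_antisymm (h ▸ hxy i) (hx0 i)).symm
      · simp [ht, h, div_mul_cancel₀]
    have ht0 : ∀ i, 0 ≤ t i := by
      intro i; by_cases h : y i = 0
      · simp [ht, h]
      · simp [ht, h]; exact div_nonneg (hx0 i) (hy0 i)
    have ht1 : ∀ i, t i ≤ 1 := by
      intro i; by_cases h : y i = 0
      · simp [ht, h]
      · have hypos : 0 < y i := lt_of_le_of_ne (hy0 i) (Ne.symm h)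
        simp [ht, h]
        exact (div_le_one hypos).2 (hxy i)
    have hxeq : x = hadMap y t := by funext i; simp [hadMap]; exact (htmul i).symm
    have htc : t ∈ convexHull ℝ (cubeV n : Set (Fin n → ℝ)) := mem_hull_cube ht0 ht1
    have h1 : x ∈ convexHull ℝ (hadMap y '' (cubeV n : Set (Fin n → ℝ))) := by
      rw [← LinearMap.image_convexHull]
      exact ⟨t, htc, hxeq.symm⟩
    refine convexHull_min ?_ (convex_convexHull ℝ _) h1
    rintro _ ⟨ε, hε, rfl⟩
    -- hadMap y ε = hadMap ε y ∈ conv W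
    have : hadMap y ε = hadMap ε y := by funext i; simp [hadMap, mul_comm]
    rw [this]
    have hyc : y ∈ convexHull ℝ (V : Set (Fin n → ℝ)) := hPV ▸ hyP
    have h2 : hadMap ε y ∈ convexHull ℝ (hadMap ε '' (V : Set (Fin n → ℝ))) := by
      rw [← LinearMap.image_convexHull]; exact ⟨y, hyc, rfl⟩
    refine convexHull_mono ?_ h2
    rintro _ ⟨v, hv, rfl⟩
    refine Finset.mem_coe.2 (Finset.mem_image.2 ⟨(v, ε), Finset.mem_product.2 ⟨hv, hε⟩, ?_⟩)
    funext i; simp [hadMap, mul_comm]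
  · -- conv W ⊆ Q
    have hQconv : Convex ℝ {x : Fin n → ℝ | ∃ y ∈ P, (∀ i, 0 ≤ x i) ∧ ∀ i, x i ≤ y i} := by
      rintro x₁ ⟨y₁, hy₁, h01, h1⟩ x₂ ⟨y₂, hy₂, h02, h2⟩ a b ha hb hab
      have hPc : Convex ℝ P := hPV ▸ convex_convexHull ℝ _
      refine ⟨a • y₁ + b • y₂, hPc hy₁ hy₂ ha hb hab, fun i => ?_, fun i => ?_⟩
      · have := add_nonneg (mul_nonneg ha (h01 i)) (mul_nonneg hb (h02 i))
        simpa using this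
      · have := add_le_add (mul_le_mul_of_nonneg_left (h1 i) ha)
          (mul_le_mul_of_nonneg_left (h2 i) hb)
        simpa using this
    refine convexHull_min ?_ hQconv
    intro w hw
    obtain ⟨⟨v, ε⟩, hmem, rfl⟩ := Finset.mem_image.1 (Finset.mem_coe.1 hw)
    obtain ⟨hv, hε⟩ := Finset.mem_product.1 hmem
    have hvP : v ∈ P := hPV ▸ subset_convexHull ℝ _ hv
    have hv0 : ∀ i, 0 ≤ v i := hPpos v hvP
    refine ⟨v, hvP, fun i => ?_, fun i => ?_⟩ <;> rcases hcube ε hε i with h | h <;>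
      simp [h, hv0 i]


lemma hasExt_of_polytope {n : ℕ} {P : Set (Fin n → ℝ)} (hP : IsPolytope P) :
    ∃ m, HasExtFormOfSize P m := by
  obtain ⟨V, hVne, hPV⟩ := hP
  classical
  set e := V.card with he
  set g : Fin e → (Fin n → ℝ) := fun j => (V.equivFin.symm j : _) with hg
  have hgV : ∀ j, g j ∈ V := fun j => (V.equivFin.symm j).2
  set L : (Fin e → ℝ) →ₗ[ℝ] (Fin n → ℝ) :=
    { toFun := fun c => ∑ j, c j • g j
      map_add' := by intro a b; simp [add_smul, Finset.sum_add_distrib]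
      map_smul' := by intro r a; simp [smul_smul, Finset.smul_sum] } with hL
  refine ⟨e, e, 1, -(1 : Matrix (Fin e) (Fin e) ℝ), 0, Matrix.of (fun _ _ => (1:ℝ)),
    (fun _ => 1), L.toAffineMap, ?_⟩
  have hset : {y : Fin e → ℝ | (-(1 : Matrix (Fin e) (Fin e) ℝ)).mulVec y ≤ 0 ∧
      (Matrix.of (fun _ _ => (1:ℝ))).mulVec y = (fun (_ : Fin 1) => (1:ℝ))} =
      stdSimplex ℝ (Fin e) := by
    ext y
    simp only [Set.mem_setOf_eq, stdSimplex, Matrix.neg_mulVec, Matrix.one_mulVec]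
    constructor
    · rintro ⟨h1, h2⟩
      refine ⟨fun j => by simpa using neg_nonpos.1 (h1 j), ?_⟩
      have := congrFun h2 0
      simpa [Matrix.mulVec, dotProduct] using this
    · rintro ⟨h1, h2⟩
      refine ⟨fun j => by simpa using neg_nonpos.2 (h1 j), ?_⟩
      funext r
      simpa [Matrix.mulVec, dotProduct] using h2
  rw [hset, hPV]
  apply Set.Subset.antisymm
  · rintro _ ⟨c, ⟨hc0, hc1⟩, rfl⟩
    have : L.toAffineMap c = Finset.univ.centerMass c g := by
      rw [Finset.centerMass_eq_of_sum_1 _ _ hc1]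
      simp [hL]
    rw [this]
    exact Finset.centerMass_mem_convexHull _ (fun j _ => hc0 j) (by rw [hc1]; norm_num)
      (fun j _ => hgV j)
  · refine convexHull_min ?_ ((convex_stdSimplex ℝ (Fin e)).is_linear_image L.isLinear)
    intro v hv
    refine ⟨fun j' => if j' = V.equivFin ⟨v, hv⟩ then 1 else 0, ⟨fun j => by positivity, by simp⟩, ?_⟩
    simp only [LinearMap.coe_toAffineMap, hL, LinearMap.coe_mk, AddHom.coe_mk,
      ite_smul, one_smul, zero_smul]
    rw [Finset.sum_ite_eq' Finset.univ (V.equivFin ⟨v, hv⟩) g]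
    simp [hg]


lemma ext_monotone {n : ℕ} {P : Set (Fin n → ℝ)} {m0 : ℕ} (h : HasExtFormOfSize P m0) :
    HasExtFormOfSize {x : Fin n → ℝ | ∃ y ∈ P, (∀ i, 0 ≤ x i) ∧ ∀ i, x i ≤ y i}
      (m0 + 2 * n) := by
  obtain ⟨e, m', A, b, C, d', π, hπ⟩ := h
  classical
  set M : Matrix (Fin n) (Fin e) ℝ := LinearMap.toMatrix' π.linear with hM
  have hMmul : ∀ y, M.mulVec y = π.linear y := by
    intro y; rw [← Matrix.toLin'_apply, hM, Matrix.toLin'_toMatrix']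
  have hdecomp : ∀ y i, π y i = π.linear y i + π 0 i := by
    intro y i
    have := congrFun (AffineMap.decomp π) y
    simp only [Pi.add_apply] at this ⊢
    rw [this]; rfl
  have key : HasExtFormOfSize {x : Fin n → ℝ | ∃ y ∈ P, (∀ i, 0 ≤ x i) ∧ ∀ i, x i ≤ y i}
      (m0 + (n + n)) := by
    set A'' : Matrix (Fin (m0 + (n + n))) (Fin (e + n)) ℝ :=
      Matrix.of (Fin.addCases
        (fun j => Fin.addCases (A j) 0)
        (Fin.addCases
          (fun i => Fin.addCases 0 (fun i' => if i' = i then (-1:ℝ) else 0))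
          (fun i => Fin.addCases (fun j => -(M i j)) (fun i' => if i' = i then (1:ℝ) else 0))))
      with hA''
    set b'' : Fin (m0 + (n + n)) → ℝ :=
      Fin.addCases b (Fin.addCases 0 (fun i => π 0 i)) with hb''
    set C'' : Matrix (Fin m') (Fin (e + n)) ℝ :=
      Matrix.of (fun r => Fin.addCases (C r) 0) with hC''
    refine ⟨e + n, m', A'', b'', C'', d',
      (LinearMap.funLeft ℝ ℝ (Fin.natAdd e)).toAffineMap, ?_⟩
    have hfeas : ∀ z : Fin (e + n) → ℝ,
        (A''.mulVec z ≤ b'' ∧ C''.mulVec z = d') ↔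
        ((A.mulVec (fun j => z (Fin.castAdd n j)) ≤ b ∧
          C.mulVec (fun j => z (Fin.castAdd n j)) = d') ∧
          (∀ i, 0 ≤ z (Fin.natAdd e i)) ∧
          (∀ i, z (Fin.natAdd e i) ≤ π (fun j => z (Fin.castAdd n j)) i)) := by
      intro z
      set yz : Fin e → ℝ := fun j => z (Fin.castAdd n j) with hyz
      set xz : Fin n → ℝ := fun i => z (Fin.natAdd e i) with hxz
      have hrow1 : ∀ j : Fin m0, A''.mulVec z (Fin.castAdd (n + n) j) = A.mulVec yz j := by
        intro j
        simp only [hA'', Matrix.mulVec, dotProduct, Matrix.of_apply, Fin.addCases_left]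
        rw [Fin.sum_univ_add]
        simp [hyz]
      have hrow2 : ∀ i : Fin n,
          A''.mulVec z (Fin.natAdd m0 (Fin.castAdd n i)) = -(xz i) := by
        intro i
        simp only [hA'', Matrix.mulVec, dotProduct, Matrix.of_apply, Fin.addCases_right,
          Fin.addCases_left]
        rw [Fin.sum_univ_add]
        simp [ite_mul, hxz]
      have hrow3 : ∀ i : Fin n,
          A''.mulVec z (Fin.natAdd m0 (Fin.natAdd n i)) = xz i - π.linear yz i := by
        intro i
        simp only [hA'', Matrix.mulVec, dotProduct, Matrix.of_apply, Fin.addCases_right]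
        rw [Fin.sum_univ_add, ← hMmul yz]
        simp [ite_mul, Matrix.mulVec, dotProduct, hxz, hyz, neg_mul]
        ring
      have hCeq : ∀ r, C''.mulVec z r = C.mulVec yz r := by
        intro r
        simp only [hC'', Matrix.mulVec, dotProduct, Matrix.of_apply]
        rw [Fin.sum_univ_add]
        simp [hyz]
      have hb1 : ∀ j : Fin m0, b'' (Fin.castAdd (n + n) j) = b j := by
        intro j; simp [hb'', Fin.addCases_left]
      have hb2 : ∀ i : Fin n, b'' (Fin.natAdd m0 (Fin.castAdd n i)) = 0 := by
        intro i; simp [hb'', Fin.addCases_right, Fin.addCases_left]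
      have hb3 : ∀ i : Fin n, b'' (Fin.natAdd m0 (Fin.natAdd n i)) = π 0 i := by
        intro i; simp only [hb'']; rw [Fin.addCases_right, Fin.addCases_right]
      constructor
      · rintro ⟨hAle, hCe⟩
        refine ⟨⟨fun j => ?_, funext fun r => ?_⟩, fun i => ?_, fun i => ?_⟩
        · have := hAle (Fin.castAdd (n + n) j)
          rwa [hrow1, hb1] at this
        · rw [← hCeq r, hCe]
        · have := hAle (Fin.natAdd m0 (Fin.castAdd n i))
          rw [hrow2, hb2] at this
          simpa using neg_nonpos.1 this
        · have := hAle (Fin.natAdd m0 (Fin.natAdd n i))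
          rw [hrow3, hb3] at this
          rw [hdecomp yz i]
          linarith [this]
      · rintro ⟨⟨hAle, hCe⟩, hx0, hxle⟩
        constructor
        · intro r
          refine Fin.addCases (fun j => ?_) (fun s => ?_) r
          · rw [hrow1, hb1]; exact hAle j
          · refine Fin.addCases (fun i => ?_) (fun i => ?_) s
            · rw [hrow2, hb2]
              simpa using neg_nonpos.2 (hx0 i)
            · rw [hrow3, hb3]
              have := hxle i
              rw [hdecomp yz i] at this
              linarith [this]
        · funext r; rw [hCeq r, hCe]
    apply Set.Subset.antisymm
    · rintro _ ⟨z, hz, rfl⟩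
      obtain ⟨⟨hA1, hC1⟩, hx0, hxle⟩ := (hfeas z).1 hz
      refine ⟨π (fun j => z (Fin.castAdd n j)), ?_, ?_, ?_⟩
      · rw [← hπ]; exact ⟨_, ⟨hA1, hC1⟩, rfl⟩
      · intro i; simpa [LinearMap.funLeft] using hx0 i
      · intro i; simpa [LinearMap.funLeft] using hxle i
    · rintro x ⟨p, hpP, hx0, hxle⟩
      rw [← hπ] at hpP
      obtain ⟨y, ⟨hA1, hC1⟩, hpy⟩ := hpP
      refine ⟨Fin.addCases y x, ?_, ?_⟩
      · apply (hfeas _).2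
        have hy : (fun j => Fin.addCases (motive := fun _ => ℝ) y x (Fin.castAdd n j)) = y := by
          funext j; rw [Fin.addCases_left]
        have hx : ∀ i, Fin.addCases (motive := fun _ => ℝ) y x (Fin.natAdd e i) = x i := by
          intro i; rw [Fin.addCases_right]
        rw [hy]
        exact ⟨⟨hA1, hC1⟩, fun i => (hx i).symm ▸ hx0 i,
          fun i => by rw [hx i, hpy]; exact hxle i⟩
      · funext i
        simp [LinearMap.funLeft]
  rwa [show m0 + (n + n) = m0 + 2 * n by ring] at key

/-- the monotone closure `Q = {x : ∃ y ∈ P, 0 ≤ x ≤ y}` of a nonempty polytope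
`P` in the nonnegative orthant is a polytope with `xc Q ≤ xc P + 2 n`. -/
theorem xc_monotone_closure {n : ℕ} (P : Set (Fin n → ℝ)) (hP : IsPolytope P)
    (hPpos : ∀ x ∈ P, ∀ i, 0 ≤ x i) :
    IsPolytope {x : Fin n → ℝ | ∃ y ∈ P, (∀ i, 0 ≤ x i) ∧ ∀ i, x i ≤ y i} ∧
    xc {x : Fin n → ℝ | ∃ y ∈ P, (∀ i, 0 ≤ x i) ∧ ∀ i, x i ≤ y i} ≤ xc P + 2 * n := by
  obtain ⟨V, hVne, hPV⟩ := hP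
  have hQeq := polytope_part P V hVne hPV hPpos
  have hWne : ((V ×ˢ cubeV n).image fun p => fun i => p.2 i * p.1 i).Nonempty := by
    apply Finset.Nonempty.image
    refine Finset.Nonempty.product hVne ⟨fun _ => 0, ?_⟩
    simp [cubeV, Fintype.mem_piFinset]
  refine ⟨⟨_, hWne, hQeq⟩, ?_⟩
  have hne : {m | HasExtFormOfSize P m}.Nonempty := hasExt_of_polytope ⟨V, hVne, hPV⟩
  have hmem : HasExtFormOfSize P (xc P) := Nat.sInf_mem hne
  exact Nat.sInf_le (ext_monotone hmem)
end
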